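/- Unitarity soundness for PUNQ: for any closed superposition λx.t⃗ ∈ ⟦♯(𝔹ⁿ) ⊸ ♯(𝔹ᵏ)⟧_∅ with k, n ≥ 1: (1) if k ≥ n, then λx.t⃗ represents an isometry ℂ^{2ⁿ} → ℂ^{2ᵏ}; (2) if k = n, then λx.t⃗ represents a unitary operator ℂ^{2ⁿ} → ℂ^{2ⁿ}; furthermore, if k < n, then ⟦♯(𝔹ⁿ) ⊸ ♯(𝔹ᵏ)⟧_∅ is empty. -/

import Mathlib

open scoped Classical

namespace PUNQFormal

/-! ### PUNQ syntax (Figure 1) -/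

mutual
inductive Term : Type
  | var : ℕ → Term
  | ket0 : Term
  | ket1 : Term
  | cond : Term → Sup → Sup → Term
  | lam : ℕ → Sup → Term
  | app : Term → Term → Term
  | pair : Term → Term → Term
  | lett : ℕ → ℕ → Term → Sup → Term
inductive Sup : Type
  | term : Term → Sup
  | zero : Sup
  | smul : ℂ → Sup → Sup
  | add : Sup → Sup → Sup
end

/-- Basis values. -/
inductive BasisValue : Term → Prop
  | ket0 : BasisValue .ket0
  | ket1 : BasisValue .ket1
  | lam (x : ℕ) (b : Sup) : BasisValue (.lam x b)
  | pair {v w : Term} : BasisValue v → BasisValue w → BasisValue (.pair v w)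

/-- Values: superpositions of basis values. -/
inductive Value : Sup → Prop
  | basis {v : Term} : BasisValue v → Value (.term v)
  | zero : Value .zero
  | smul (α : ℂ) {s : Sup} : Value s → Value (.smul α s)
  | add {s t : Sup} : Value s → Value t → Value (.add s t)

mutual
def fvT : Term → Finset ℕ
  | .var x => {x}
  | .ket0 => ∅
  | .ket1 => ∅
  | .cond t s r => fvT t ∪ fvS s ∪ fvS r
  | .lam x b => fvS b \ {x}
  | .app t s => fvT t ∪ fvT s
  | .pair t s => fvT t ∪ fvT s
  | .lett x y t b => fvT t ∪ (fvS b \ {x, y})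
def fvS : Sup → Finset ℕ
  | .term t => fvT t
  | .zero => ∅
  | .smul _ s => fvS s
  | .add s t => fvS s ∪ fvS t
end

/-! ### Syntactic sugar (Figure 2): distributing constructs over superpositions -/

def iteS : Sup → Sup → Sup → Sup
  | .term t, s, r => .term (.cond t s r)
  | .zero, _, _ => .zero
  | .smul α c, s, r => .smul α (iteS c s r)
  | .add c d, s, r => .add (iteS c s r) (iteS d s r)

def appSR (t : Term) : Sup → Sup
  | .term r => .term (.app t r)
  | .zero => .zero
  | .smul α s => .smul α (appSR t s)
  | .add s r => .add (appSR t s) (appSR t r)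

def appS : Sup → Sup → Sup
  | .term t, u => appSR t u
  | .zero, _ => .zero
  | .smul α s, u => .smul α (appS s u)
  | .add s r, u => .add (appS s u) (appS r u)

def pairSR (t : Term) : Sup → Sup
  | .term r => .term (.pair t r)
  | .zero => .zero
  | .smul α s => .smul α (pairSR t s)
  | .add s r => .add (pairSR t s) (pairSR t r)

def pairS : Sup → Sup → Sup
  | .term t, u => pairSR t u
  | .zero, _ => .zero
  | .smul α s, u => .smul α (pairS s u)
  | .add s r, u => .add (pairS s u) (pairS r u)

def letS (x y : ℕ) : Sup → Sup → Sup
  | .term t, b => .term (.lett x y t b)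
  | .zero, _ => .zero
  | .smul α c, b => .smul α (letS x y c b)
  | .add c d, b => .add (letS x y c b) (letS x y d b)

/-! ### Substitution -/

mutual
/-- Substitution of a superposition for a variable in a term,
distributing over superpositions via the syntactic sugar. -/
def substT : Term → ℕ → Sup → Sup
  | .var y, x, u => if y = x then u else .term (.var y)
  | .ket0, _, _ => .term .ket0
  | .ket1, _, _ => .term .ket1
  | .cond t s r, x, u => iteS (substT t x u) (substS s x u) (substS r x u)
  | .lam y b, x, u => if y = x then .term (.lam y b) else .term (.lam y (substS b x u))
  | .app t s, x, u => appS (substT t x u) (substT s x u)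
  | .pair t s, x, u => pairS (substT t x u) (substT s x u)
  | .lett y z t b, x, u =>
      letS y z (substT t x u) (if x = y ∨ x = z then b else substS b x u)
def substS : Sup → ℕ → Sup → Sup
  | .term t, x, u => substT t x u
  | .zero, _, _ => .zero
  | .smul α s, x, u => .smul α (substS s x u)
  | .add s r, x, u => .add (substS s x u) (substS r x u)
end

mutual
/-- Simultaneous substitution of terms for variables. -/
def msubT : Term → (ℕ → Option Term) → Term
  | .var y, σ => (σ y).getD (.var y)
  | .ket0, _ => .ket0
  | .ket1, _ => .ket1
  | .cond t s r, σ => .cond (msubT t σ) (msubS s σ) (msubS r σ)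
  | .lam y b, σ => .lam y (msubS b fun z => if z = y then none else σ z)
  | .app t s, σ => .app (msubT t σ) (msubT s σ)
  | .pair t s, σ => .pair (msubT t σ) (msubT s σ)
  | .lett y z t b, σ =>
      .lett y z (msubT t σ) (msubS b fun w => if w = y ∨ w = z then none else σ w)
def msubS : Sup → (ℕ → Option Term) → Sup
  | .term t, σ => .term (msubT t σ)
  | .zero, _ => .zero
  | .smul α s, σ => .smul α (msubS s σ)
  | .add s r, σ => .add (msubS s σ) (msubS r σ)
end

/-- Renaming `t[x/y]`: replace the free variable `y` by `x`. -/
def rename (t : Sup) (y x : ℕ) : Sup :=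
  msubS t fun z => if z = y then some (.var x) else none

/-! ### The vector-space equivalence ≡ -/

inductive SupEq : Sup → Sup → Prop
  | addComm (s t : Sup) : SupEq (.add s t) (.add t s)
  | addAssoc (s t r : Sup) : SupEq (.add (.add s t) r) (.add s (.add t r))
  | zeroAdd (t : Sup) : SupEq (.add .zero t) t
  | zeroSmul (t : Sup) : SupEq (.smul 0 t) .zero
  | oneSmul (t : Sup) : SupEq (.smul 1 t) t
  | smulSmul (α β : ℂ) (t : Sup) : SupEq (.smul α (.smul β t)) (.smul (α * β) t)
  | smulAddSame (α β : ℂ) (t : Sup) :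
      SupEq (.add (.smul α t) (.smul β t)) (.smul (α + β) t)
  | smulDist (α : ℂ) (s t : Sup) :
      SupEq (.smul α (.add s t)) (.add (.smul α s) (.smul α t))
  | refl (t : Sup) : SupEq t t
  | symm {s t : Sup} : SupEq s t → SupEq t s
  | trans {s t r : Sup} : SupEq s t → SupEq t r → SupEq s r
  | smulCongr (α : ℂ) {s t : Sup} : SupEq s t → SupEq (.smul α s) (.smul α t)
  | addCongr {s t s' t' : Sup} : SupEq s t → SupEq s' t' → SupEq (.add s s') (.add t t')

/-! ### Canonical forms -/

def mkSum : List (ℂ × Term) → Sup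
  | [] => .zero
  | [p] => .smul p.1 (.term p.2)
  | p :: l => .add (.smul p.1 (.term p.2)) (mkSum l)

def mkSumS : List (ℂ × Sup) → Sup
  | [] => .zero
  | [p] => .smul p.1 p.2
  | p :: l => .add (.smul p.1 p.2) (mkSumS l)

/-- Canonical form: pairwise distinct terms, all coefficients nonzero. -/
def CForm (l : List (ℂ × Term)) : Prop :=
  (l.map Prod.snd).Nodup ∧ ∀ p ∈ l, p.1 ≠ 0

/-! ### Operational semantics (Figure 3) -/

inductive Step : Sup → Sup → Prop
  | if0 {s t : Sup} : Step (.term (.cond .ket0 s t)) s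
  | if1 {s t : Sup} : Step (.term (.cond .ket1 s t)) t
  | abs {x : ℕ} {b : Sup} {v : Term} :
      BasisValue v → Step (.term (.app (.lam x b) v)) (substS b x (.term v))
  | lett {x y : ℕ} {v w : Term} {b : Sup} :
      BasisValue v → BasisValue w →
      Step (.term (.lett x y (.pair v w) b)) (substS (substS b x (.term v)) y (.term w))
  | condCong {t : Term} {s r₁ r₂ : Sup} :
      Step (.term t) s → Step (.term (.cond t r₁ r₂)) (iteS s r₁ r₂)
  | appR {r t : Term} {s : Sup} :
      Step (.term t) s → Step (.term (.app r t)) (appSR r s)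
  | appL {t v : Term} {s : Sup} :
      BasisValue v → Step (.term t) s → Step (.term (.app t v)) (appS s (.term v))
  | pairL {t r : Term} {s : Sup} :
      Step (.term t) s → Step (.term (.pair t r)) (pairS s (.term r))
  | pairR {v t : Term} {s : Sup} :
      BasisValue v → Step (.term t) s → Step (.term (.pair v t)) (pairS (.term v) s)
  | letCong {x y : ℕ} {t : Term} {s r : Sup} :
      Step (.term t) s → Step (.term (.lett x y t r)) (letS x y s r)
  | sup (l w : List (ℂ × Term)) (f : ℕ → Sup) :
      l ≠ [] →
      CForm (l ++ w) →
      (∀ i : Fin l.length, Step (.term (l.get i).2) (f i.val)) →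
      (∀ p ∈ w, BasisValue p.2) →
      Step (mkSum (l ++ w))
        (Sup.add (mkSumS ((List.range l.length).map fun i => ((l.getD i (0, Term.ket0)).1, f i)))
          (mkSum w))
  | equ {t t₁ s₁ s : Sup} : SupEq t t₁ → Step t₁ s₁ → SupEq s₁ s → Step t s

/-- Reflexive-transitive closure of the small-step relation. -/
def StepStar : Sup → Sup → Prop := Relation.ReflTransGen Step

inductive StepN : ℕ → Sup → Sup → Prop
  | zero (t : Sup) : StepN 0 t t
  | succ {n : ℕ} {t s r : Sup} : Step t s → StepN n s r → StepN (n + 1) t r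

/-! ### Inner product and orthogonality -/

noncomputable def coeff (v : Term) : Sup → ℂ
  | .term w => if v = w then 1 else 0
  | .zero => 0
  | .smul α s => α * coeff v s
  | .add s t => coeff v s + coeff v t

/-- Inner product on (raw syntactic) values. -/
noncomputable def inn : Sup → Sup → ℂ
  | .term v, w => coeff v w
  | .zero, _ => 0
  | .smul α s, w => (starRingEnd ℂ) α * inn s w
  | .add s t, w => inn s w + inn t w

/-- Orthogonality of closed superpositions. -/
def Ortho (t s : Sup) : Prop :=
  ∃ v w : Sup, Value v ∧ Value w ∧ StepStar t v ∧ StepStar s w ∧ inn v w = 0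

/-- Orthogonality of open superpositions: orthogonality under every substitution of
the variables of the domain `D` by closed basis values. -/
def OrthoOpen (D : Set ℕ) (s₁ s₂ : Sup) : Prop :=
  ∀ σ : ℕ → Option Term,
    (∀ x ∈ D, ∃ v, σ x = some v ∧ BasisValue v ∧ fvT v = ∅) →
    (∀ x ∉ D, σ x = none) →
    Ortho (msubS s₁ σ) (msubS s₂ σ)

/-! ### Sizes -/

mutual
def sizeT : Term → ℕ
  | .var _ => 1
  | .ket0 => 1
  | .ket1 => 1
  | .cond t s r => 1 + sizeT t + max (sizeS s) (sizeS r)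
  | .lam _ b => 1 + sizeS b
  | .app t s => 1 + sizeT t + sizeT s
  | .pair t s => 1 + sizeT t + sizeT s
  | .lett _ _ t b => 1 + sizeT t + sizeS b
def sizeS : Sup → ℕ
  | .term t => sizeT t
  | .zero => 0
  | .smul _ s => sizeS s
  | .add s t => max (sizeS s) (sizeS t)
end

/-! ### Types (Section 3.1) -/

inductive Ty : Type
  | tvar : ℕ → Ty
  | lolli : Ty → Ty → Ty
  | arrow : Ty → Ty → Ty
  | prod : Ty → Ty → Ty
  | bit : Ty
  | sharp : Ty → Ty
  | sect : Ty → Ty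
  | all : ℕ → Ty → Ty
deriving DecidableEq

/-- Ground types `Q := 𝔹 | ♯Q | §Q | Q×Q`. -/
inductive IsGround : Ty → Prop
  | bit : IsGround .bit
  | sharp {Q} : IsGround Q → IsGround (.sharp Q)
  | sect {Q} : IsGround Q → IsGround (.sect Q)
  | prod {Q R} : IsGround Q → IsGround R → IsGround (.prod Q R)

/-- The bang function `!` (Definition 3.1): erases the `♯` modality. -/
def bang : Ty → Ty
  | .tvar X => .tvar X
  | .bit => .bit
  | .lolli A B => .lolli A B
  | .arrow A B => .arrow A B
  | .prod A B => .prod (bang A) (bang B)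
  | .sharp Q => bang Q
  | .sect A => .sect (bang A)
  | .all X A => .all X (bang A)

/-- Subtyping (Figure 4). -/
inductive Sub : Ty → Ty → Prop
  | refl (A : Ty) : Sub A A
  | trans {A B C} : Sub A B → Sub B C → Sub A C
  | lolli {A A' B B'} : Sub A' A → Sub B B' → Sub (.lolli A B) (.lolli A' B')
  | arrow {A A' B B'} : Sub A' A → Sub B B' → Sub (.arrow A B) (.arrow A' B')
  | prod {A A' B B'} : Sub A A' → Sub B B' → Sub (.prod A B) (.prod A' B')
  | sect {A B} : Sub A B → Sub (.sect A) (.sect B)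
  | all {A B} (X : ℕ) : Sub A B → Sub (.all X A) (.all X B)
  | sharpIntro {Q} : IsGround Q → Sub Q (.sharp Q)
  | sharpIdem {Q} : IsGround Q → Sub (.sharp (.sharp Q)) (.sharp Q)
  | sharpBang {Q} : IsGround Q → Sub Q (.sharp (bang Q))
  | sharpSect {Q} : IsGround Q → Sub (.sharp (.sect Q)) (.sect (.sharp Q))

/-- Polarity-aware type substitution `σ⁺/σ⁻` (`pol = true` is `σ⁺`). -/
def tsubst (pol : Bool) (X : ℕ) (B : Ty) : Ty → Ty
  | .tvar Y => if Y = X then (if pol then B else bang B) else .tvar Y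
  | .bit => .bit
  | .lolli A C => .lolli (tsubst pol X B A) (tsubst pol X B C)
  | .arrow A C => .arrow (tsubst false X B A) (tsubst true X B C)
  | .prod A C => .prod (tsubst pol X B A) (tsubst pol X B C)
  | .sharp Q => .sharp (tsubst pol X B Q)
  | .sect A => .sect (tsubst pol X B A)
  | .all Y A => if Y = X then .all Y A else .all Y (tsubst pol X B A)

/-- Free type variables of a type. -/
def ftvTy : Ty → Finset ℕ
  | .tvar X => {X}
  | .bit => ∅
  | .lolli A B => ftvTy A ∪ ftvTy B
  | .arrow A B => ftvTy A ∪ ftvTy B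
  | .prod A B => ftvTy A ∪ ftvTy B
  | .sharp A => ftvTy A
  | .sect A => ftvTy A
  | .all X A => ftvTy A \ {X}

/-! ### Typing environments -/

abbrev Ctx (T : Type) := ℕ → Option T

def Ctx.emp {T : Type} : Ctx T := fun _ => none
def Ctx.single {T : Type} (x : ℕ) (A : T) : Ctx T := fun y => if y = x then some A else none
def Ctx.union {T : Type} (Γ Δ : Ctx T) : Ctx T := fun x => (Γ x).orElse fun _ => Δ x
def Ctx.Disj {T : Type} (Γ Δ : Ctx T) : Prop := ∀ x, Γ x = none ∨ Δ x = none
def Ctx.dom {T : Type} (Γ : Ctx T) : Set ℕ := {x | Γ x ≠ none}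

/-- All four contexts pairwise disjoint. -/
def Ok4 {T : Type} (Γ Γ' Δ Δ' : Ctx T) : Prop :=
  Ctx.Disj Γ Γ' ∧ Ctx.Disj Γ Δ ∧ Ctx.Disj Γ Δ' ∧ Ctx.Disj Γ' Δ ∧ Ctx.Disj Γ' Δ' ∧ Ctx.Disj Δ Δ'

def ctxFtv (Γ : Ctx Ty) : Set ℕ := {X | ∃ x A, Γ x = some A ∧ X ∈ ftvTy A}

/-! ### The PUNQ type system (Figure 5) -/

inductive TJ : Ctx Ty → Ctx Ty → Sup → Ty → Prop
  | weak {Γ Γ' Δ : Ctx Ty} {t : Sup} {A : Ty} :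
      TJ Γ Δ t A → Ctx.Disj Γ Γ' → Ctx.Disj Γ' Δ →
      TJ (Ctx.union Γ Γ') Δ t A
  | contr {Γ Δ : Ctx Ty} {t : Sup} {A B : Ty} {x y : ℕ} :
      TJ (Ctx.union Γ (Ctx.union (Ctx.single x B) (Ctx.single y B))) Δ t A →
      x ≠ y → Γ x = none → Γ y = none → Δ x = none → Δ y = none →
      TJ (Ctx.union Γ (Ctx.single x B)) Δ (rename t y x) A
  | equiv {Γ Δ : Ctx Ty} {t s : Sup} {A : Ty} :
      TJ Γ Δ t A → SupEq t s → TJ Γ Δ s A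
  | sub {Γ Δ : Ctx Ty} {t : Sup} {A B : Ty} :
      TJ Γ Δ t A → Sub A B → TJ Γ Δ t B
  | ax (x : ℕ) (A : Ty) : TJ Ctx.emp (Ctx.single x A) (.term (.var x)) A
  | ket0 : TJ Ctx.emp Ctx.emp (.term .ket0) .bit
  | ket1 : TJ Ctx.emp Ctx.emp (.term .ket1) .bit
  | cond {Γ Δ Γ' Δ' : Ctx Ty} {t : Term} {s₁ s₂ : Sup} {A : Ty} :
      TJ Γ Δ (.term t) .bit → TJ Γ' Δ' s₁ A → TJ Γ' Δ' s₂ A → Ok4 Γ Γ' Δ Δ' →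
      TJ (Ctx.union Γ Γ') (Ctx.union Δ Δ') (.term (.cond t s₁ s₂)) A
  | condSharp {Γ Δ Γ' Δ' : Ctx Ty} {t : Term} {s₁ s₂ : Sup} {Q : Ty} :
      TJ Γ Δ (.term t) (.sharp .bit) → TJ Γ' Δ' s₁ Q → TJ Γ' Δ' s₂ Q →
      IsGround Q → OrthoOpen (Ctx.dom (Ctx.union Γ' Δ')) s₁ s₂ → Ok4 Γ Γ' Δ Δ' →
      TJ (Ctx.union Γ Γ') (Ctx.union Δ Δ') (.term (.cond t s₁ s₂)) (.sharp Q)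
  | sectI {Γ Δ : Ctx Ty} {t : Sup} {A : Ty} :
      TJ Ctx.emp (Ctx.union Γ Δ) t A → Ctx.Disj Γ Δ →
      TJ Γ (fun x => (Δ x).map Ty.sect) t (.sect A)
  | sectE {Γ Δ Γ' Δ' : Ctx Ty} {s t : Term} {x : ℕ} {A B : Ty} :
      TJ Γ Δ (.term s) (.sect B) →
      TJ Γ' (Ctx.union Δ' (Ctx.single x (.sect B))) (.term t) A →
      Ok4 Γ Γ' Δ Δ' → Γ' x = none → Δ' x = none →
      TJ (Ctx.union Γ Γ') (Ctx.union Δ Δ') (substT t x (.term s)) A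
  | allI {Γ Δ : Ctx Ty} {t : Sup} {A : Ty} {X : ℕ} :
      TJ Γ Δ t A → X ∉ ctxFtv Γ ∪ ctxFtv Δ → TJ Γ Δ t (.all X A)
  | allE {Γ Δ : Ctx Ty} {t : Sup} {A : Ty} {X : ℕ} (B : Ty) :
      TJ Γ Δ t (.all X A) → TJ Γ Δ t (tsubst true X B A)
  | sharpI {Γ Δ : Ctx Ty} {Q : Ty} (l : List (ℂ × Sup)) :
      IsGround Q → (∀ p ∈ l, TJ Γ Δ p.2 Q) →
      l.Pairwise (fun p q => OrthoOpen (Ctx.dom (Ctx.union Γ Δ)) p.2 q.2) →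
      (l.map fun p => Complex.normSq p.1).sum = 1 →
      TJ Γ Δ (mkSumS l) (.sharp Q)
  | lolliI {Γ Δ : Ctx Ty} {b : Sup} {A B : Ty} (x : ℕ) :
      TJ Γ (Ctx.union Δ (Ctx.single x A)) b B → Γ x = none → Δ x = none →
      TJ Γ Δ (.term (.lam x b)) (.lolli A B)
  | lolliE {Γ Δ Γ' Δ' : Ctx Ty} {t s : Term} {A B : Ty} :
      TJ Γ Δ (.term t) (.lolli A B) → TJ Γ' Δ' (.term s) A → Ok4 Γ Γ' Δ Δ' →
      TJ (Ctx.union Γ Γ') (Ctx.union Δ Δ') (.term (.app t s)) B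
  | arrowI {Γ Δ : Ctx Ty} {b : Sup} {A B : Ty} (x : ℕ) :
      TJ (Ctx.union Γ (Ctx.single x A)) Δ b B → Γ x = none → Δ x = none →
      TJ Γ Δ (.term (.lam x b)) (.arrow (bang A) B)
  | arrowE0 {Γ Δ : Ctx Ty} {t s : Term} {A B : Ty} :
      TJ Γ Δ (.term t) (.arrow A B) → TJ Ctx.emp Ctx.emp (.term s) A →
      TJ Γ Δ (.term (.app t s)) B
  | arrowE1 {Γ Δ : Ctx Ty} {t s : Term} {A B : Ty} (z : ℕ) (C : Ty) :
      TJ Γ Δ (.term t) (.arrow A B) → TJ Ctx.emp (Ctx.single z C) (.term s) A →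
      Γ z = none → Δ z = none →
      TJ (Ctx.union Γ (Ctx.single z C)) Δ (.term (.app t s)) B
  | prodI {Γ Δ Γ' Δ' : Ctx Ty} {t s : Term} {A B : Ty} :
      TJ Γ Δ (.term t) A → TJ Γ' Δ' (.term s) B → Ok4 Γ Γ' Δ Δ' →
      TJ (Ctx.union Γ Γ') (Ctx.union Δ Δ') (.term (.pair t s)) (.prod A B)
  | prodE {Γ Δ Γ' Δ' : Ctx Ty} {t : Term} {s : Sup} {A B C : Ty} (x y : ℕ) :
      TJ Γ Δ (.term t) (.prod A B) →
      TJ Γ' (Ctx.union (Ctx.union Δ' (Ctx.single x A)) (Ctx.single y B)) s C →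
      x ≠ y → Γ' x = none → Δ' x = none → Γ' y = none → Δ' y = none →
      Ok4 Γ Γ' Δ Δ' →
      TJ (Ctx.union Γ Γ') (Ctx.union Δ Δ') (.term (.lett x y t s)) C
  | prodESharp {Γ Δ Γ' Δ' : Ctx Ty} {t : Term} {s : Sup} {Q R S : Ty} (x y : ℕ) :
      TJ Γ Δ (.term t) (.sharp (.prod Q R)) →
      TJ Γ' (Ctx.union (Ctx.union Δ' (Ctx.single x (.sharp Q))) (Ctx.single y (.sharp R))) s S →
      IsGround Q → IsGround R → IsGround S →
      x ≠ y → Γ' x = none → Δ' x = none → Γ' y = none → Δ' y = none →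
      Ok4 Γ Γ' Δ Δ' →
      TJ (Ctx.union Γ Γ') (Ctx.union Δ Δ') (.term (.lett x y t s)) (.sharp S)

/-! ### Realizability semantics (Figure 6) -/

/-- Closed superpositions. -/
def ClosedS (s : Sup) : Prop := fvS s = ∅

/-- The unit sphere: closed values of norm 1. -/
def S1 : Set Sup := {v | Value v ∧ ClosedS v ∧ ‖inn v v‖ ^ 2 = 1}

/-- `t ⊩ S`: `t` reduces to some value in `S`. -/
def Realizes (t : Sup) (S : Set Sup) : Prop := ∃ v ∈ S, StepStar t v

/-- Span: finite linear combinations (up to `≡`) of elements of `S`. -/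
def spanS (S : Set Sup) : Set Sup :=
  {s | ∃ l : List (ℂ × Sup), (∀ p ∈ l, p.2 ∈ S) ∧ SupEq s (mkSumS l)}

/-- The basis values occurring with nonzero amplitude in a value. -/
def baseOf : Sup → Set Term
  | .term v => {v}
  | .zero => ∅
  | .smul α s => if α = 0 then ∅ else baseOf s
  | .add s t => baseOf s ∪ baseOf t

/-- `♭S`. -/
def flatS (S : Set Sup) : Set Term := ⋃ v ∈ S, baseOf v

/-- The unitary semantics `⟦A⟧_τ` (Figure 6). -/
def sem : Ty → (ℕ → Set Sup) → Set Sup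
  | .tvar X, τ => τ X
  | .bit, _ => {Sup.term .ket0, Sup.term .ket1}
  | .sharp A, τ => spanS (sem A τ) ∩ S1
  | .sect A, τ => sem A τ
  | .prod A B, τ => {s | ∃ v ∈ sem A τ, ∃ w ∈ sem B τ, s = pairS v w}
  | .lolli A B, τ =>
      {s | (∃ x b, s = .term (.lam x b)) ∧ ∀ v ∈ sem A τ, Realizes (appS s v) (sem B τ)}
  | .arrow A B, τ =>
      {s | (∃ x b, s = .term (.lam x b)) ∧
        ∀ v ∈ flatS (sem A τ), Realizes (appS s (.term v)) (sem B τ)}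
  | .all X A, τ => {s | ∀ R : Set Sup, R ⊆ S1 → s ∈ sem A (Function.update τ X R)}

/-- Types with no type variables and no universal quantifiers. -/
inductive SimpleTy : Ty → Prop
  | bit : SimpleTy .bit
  | lolli {A B} : SimpleTy A → SimpleTy B → SimpleTy (.lolli A B)
  | arrow {A B} : SimpleTy A → SimpleTy B → SimpleTy (.arrow A B)
  | prod {A B} : SimpleTy A → SimpleTy B → SimpleTy (.prod A B)
  | sharp {A} : SimpleTy A → SimpleTy (.sharp A)
  | sect {A} : SimpleTy A → SimpleTy (.sect A)

/-! ### Validity of judgments (Section 5.1) -/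

/-- Decomposition of a superposition into a linear combination of terms. -/
def decomp : Sup → List (ℂ × Term)
  | .term t => [(1, t)]
  | .zero => []
  | .smul α s => (decomp s).map fun p => (α * p.1, p.2)
  | .add s t => decomp s ++ decomp t

/-- Plain substitution of a single (basis-value) term. -/
def subst1 (t : Sup) (x : ℕ) (v : Term) : Sup :=
  msubS t fun y => if y = x then some v else none

/-- Linear-extension substitution `t⃗⟨u⃗/x⟩ = Σᵢ αᵢ · t⃗[vᵢ/x]`. -/
def lsubst (t : Sup) (x : ℕ) (u : Sup) : Sup :=
  mkSumS ((decomp u).map fun p => (p.1, subst1 t x p.2))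

/-- Apply a finite substitution (of closed values) by linear extension. -/
def applyVSubst (σ : List (ℕ × Sup)) (t : Sup) : Sup :=
  σ.foldl (fun t p => lsubst t p.1 p.2) t

/-- `σ ∈ ⟦Γ⟧_τ`: a substitution with domain `dom Γ` assigning to each variable a
closed value in the semantics of its type. -/
def SemSubst (τ : ℕ → Set Sup) (Γ : Ctx Ty) (σ : List (ℕ × Sup)) : Prop :=
  (σ.map Prod.fst).Nodup ∧
  (∀ x, (Γ x).isSome ↔ x ∈ σ.map Prod.fst) ∧
  (∀ p ∈ σ, ∀ A, Γ p.1 = some A → p.2 ∈ sem A τ)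

/-- A typing judgment `Γ;Δ ⊢ t⃗ : A` is valid. -/
def ValidJ (Γ Δ : Ctx Ty) (t : Sup) (A : Ty) : Prop :=
  Ctx.dom Δ ⊆ ↑(fvS t) ∧ (↑(fvS t) : Set ℕ) ⊆ Ctx.dom Γ ∪ Ctx.dom Δ ∧
  ∀ (τ : ℕ → Set Sup) (σ : List (ℕ × Sup)),
    (∀ X, τ X ⊆ S1) →
    SemSubst τ (Ctx.union Γ Δ) σ →
    Realizes (applyVSubst σ t) (sem A τ)

/-! ### Qubit tuples, isometries, representation (Section 5.2) -/

/-- The type `𝔹ⁿ` of `n`-tuples of bits. -/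
def bitsTy : ℕ → Ty
  | 0 => .bit
  | 1 => .bit
  | n + 2 => .prod .bit (bitsTy (n + 1))

def ketBit (b : Bool) : Term := if b then .ket1 else .ket0

/-- `|i⟩` as a right-nested `n`-tuple of bits (most significant bit first). -/
def ketN : ℕ → ℕ → Term
  | 0, _ => .ket0
  | 1, i => ketBit (i.testBit 0)
  | n + 2, i => .pair (ketBit (i.testBit (n + 1))) (ketN (n + 1) i)

/-- The linear map `[[·]]` sending a value of type `♯(𝔹ⁿ)` to its coordinate vector. -/
noncomputable def lmap (n : ℕ) (v : Sup) : Fin (2 ^ n) → ℂ :=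
  fun i => inn (.term (ketN n i.val)) v

noncomputable def cInner {m : ℕ} (u v : Fin m → ℂ) : ℂ :=
  ∑ i, (starRingEnd ℂ) (u i) * v i

/-- An operator is isometric if it preserves the inner product. -/
def IsIsometricOp {n k : ℕ} (F : (Fin n → ℂ) →ₗ[ℂ] (Fin k → ℂ)) : Prop :=
  ∀ u v, cInner (F u) (F v) = cInner u v

/-- The empty type-variable valuation. -/
def emptyVal : ℕ → Set Sup := fun _ => ∅

/-- `t⃗` (of type `♯(𝔹ⁿ) ⊸ ♯(𝔹ᵏ)`) represents the operator `F`. -/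
def Represents (n k : ℕ) (t : Sup)
    (F : (Fin (2 ^ n) → ℂ) →ₗ[ℂ] (Fin (2 ^ k) → ℂ)) : Prop :=
  ∀ v w : Sup, v ∈ sem (.sharp (bitsTy n)) emptyVal → w ∈ sem (.sharp (bitsTy k)) emptyVal →
    (StepStar (appS t v) w ↔ F (lmap n v) = lmap k w)

/-! ### DLAL_*: terms, reduction, typing (Section 6.1, Figure 8) -/

inductive DTerm : Type
  | var : ℕ → DTerm
  | lam : ℕ → DTerm → DTerm
  | app : DTerm → DTerm → DTerm
  | star : DTerm
deriving DecidableEq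

/-- Size of a DLAL_* term (number of symbols). -/
def dsize : DTerm → ℕ
  | .var _ => 1
  | .lam _ t => 1 + dsize t
  | .app t s => 1 + dsize t + dsize s
  | .star => 1

def dsubst : DTerm → ℕ → DTerm → DTerm
  | .var y, x, u => if y = x then u else .var y
  | .lam y b, x, u => if y = x then .lam y b else .lam y (dsubst b x u)
  | .app t s, x, u => .app (dsubst t x u) (dsubst s x u)
  | .star, _, _ => .star

def drename (t : DTerm) (y x : ℕ) : DTerm := dsubst t y (.var x)

/-- Call-by-value values. -/
inductive DVal : DTerm → Prop
  | var (x : ℕ) : DVal (.var x)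
  | lam (x : ℕ) (t : DTerm) : DVal (.lam x t)
  | star : DVal .star

/-- Call-by-value β-reduction; `*` never reduces. -/
inductive DStep : DTerm → DTerm → Prop
  | beta {x : ℕ} {t v : DTerm} : DVal v → DStep (.app (.lam x t) v) (dsubst t x v)
  | appL {t t' s : DTerm} : DStep t t' → DStep (.app t s) (.app t' s)
  | appR {v s s' : DTerm} : DVal v → DStep s s' → DStep (.app v s) (.app v s')

def DNormal (t : DTerm) : Prop := ∀ s, ¬ DStep t s

/-- DLAL types. -/
inductive DTy : Type
  | tvar : ℕ → DTy
  | lolli : DTy → DTy → DTy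
  | arrow : DTy → DTy → DTy
  | sect : DTy → DTy
  | all : ℕ → DTy → DTy
deriving DecidableEq

def dtysubst (X : ℕ) (B : DTy) : DTy → DTy
  | .tvar Y => if Y = X then B else .tvar Y
  | .lolli A C => .lolli (dtysubst X B A) (dtysubst X B C)
  | .arrow A C => .arrow (dtysubst X B A) (dtysubst X B C)
  | .sect A => .sect (dtysubst X B A)
  | .all Y A => if Y = X then .all Y A else .all Y (dtysubst X B A)

def dftv : DTy → Finset ℕ
  | .tvar X => {X}
  | .lolli A B => dftv A ∪ dftv B
  | .arrow A B => dftv A ∪ dftv B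
  | .sect A => dftv A
  | .all X A => dftv A \ {X}

def dctxFtv (Γ : Ctx DTy) : Set ℕ := {X | ∃ x A, Γ x = some A ∧ X ∈ dftv A}

/-- The DLAL_* type system (Figure 8, plus the rule for `*`). -/
inductive DJ : Ctx DTy → Ctx DTy → DTerm → DTy → Prop
  | weak {Γ Γ' Δ Δ' : Ctx DTy} {t : DTerm} {A : DTy} :
      DJ Γ Δ t A → Ok4 Γ Γ' Δ Δ' → DJ (Ctx.union Γ Γ') (Ctx.union Δ Δ') t A
  | contr {Γ Δ : Ctx DTy} {t : DTerm} {A B : DTy} {x y : ℕ} :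
      DJ (Ctx.union Γ (Ctx.union (Ctx.single x B) (Ctx.single y B))) Δ t A →
      x ≠ y → Γ x = none → Γ y = none → Δ x = none → Δ y = none →
      DJ (Ctx.union Γ (Ctx.single x B)) Δ (drename t y x) A
  | id (x : ℕ) (A : DTy) : DJ Ctx.emp (Ctx.single x A) (.var x) A
  | lolliI {Γ Δ : Ctx DTy} {b : DTerm} {A B : DTy} (x : ℕ) :
      DJ Γ (Ctx.union Δ (Ctx.single x A)) b B → Γ x = none → Δ x = none →
      DJ Γ Δ (.lam x b) (.lolli A B)
  | lolliE {Γ Δ Γ' Δ' : Ctx DTy} {t s : DTerm} {A B : DTy} :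
      DJ Γ Δ t (.lolli A B) → DJ Γ' Δ' s A → Ok4 Γ Γ' Δ Δ' →
      DJ (Ctx.union Γ Γ') (Ctx.union Δ Δ') (.app t s) B
  | arrowI {Γ Δ : Ctx DTy} {b : DTerm} {A B : DTy} (x : ℕ) :
      DJ (Ctx.union Γ (Ctx.single x A)) Δ b B → Γ x = none → Δ x = none →
      DJ Γ Δ (.lam x b) (.arrow A B)
  | arrowE0 {Γ Δ : Ctx DTy} {t s : DTerm} {A B : DTy} :
      DJ Γ Δ t (.arrow A B) → DJ Ctx.emp Ctx.emp s A →
      DJ Γ Δ (.app t s) B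
  | arrowE1 {Γ Δ : Ctx DTy} {t s : DTerm} {A B : DTy} (z : ℕ) (C : DTy) :
      DJ Γ Δ t (.arrow A B) → DJ Ctx.emp (Ctx.single z C) s A →
      Γ z = none → Δ z = none →
      DJ (Ctx.union Γ (Ctx.single z C)) Δ (.app t s) B
  | sectI {Γ Δ : Ctx DTy} {t : DTerm} {A : DTy} :
      DJ Ctx.emp (Ctx.union Γ Δ) t A → Ctx.Disj Γ Δ →
      DJ Γ (fun x => (Δ x).map DTy.sect) t (.sect A)
  | sectE {Γ Δ Γ' Δ' : Ctx DTy} {s t : DTerm} {x : ℕ} {A B : DTy} :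
      DJ Γ Δ s (.sect B) →
      DJ Γ' (Ctx.union Δ' (Ctx.single x (.sect B))) t A →
      Ok4 Γ Γ' Δ Δ' → Γ' x = none → Δ' x = none →
      DJ (Ctx.union Γ Γ') (Ctx.union Δ Δ') (dsubst t x s) A
  | allI {Γ Δ : Ctx DTy} {t : DTerm} {A : DTy} {X : ℕ} :
      DJ Γ Δ t A → X ∉ dctxFtv Γ ∪ dctxFtv Δ → DJ Γ Δ t (.all X A)
  | allE {Γ Δ : Ctx DTy} {t : DTerm} {A : DTy} {X : ℕ} (B : DTy) :
      DJ Γ Δ t (.all X A) → DJ Γ Δ t (dtysubst X B A)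
  | star (X : ℕ) : DJ Ctx.emp Ctx.emp .star (.all X (.tvar X))

/-! ### Reduction of sets of DLAL_* terms -/

/-- One set-reduction step: every term takes one reduction step (normal terms stay). -/
def DSetStep (S T : Set DTerm) : Prop :=
  T = {t | ∃ s ∈ S, DStep s t ∨ (DNormal s ∧ t = s)}

inductive DSetStepN : ℕ → Set DTerm → Set DTerm → Prop
  | zero (S : Set DTerm) : DSetStepN 0 S S
  | succ {n : ℕ} {S T U : Set DTerm} :
      DSetStep S T → DSetStepN n T U → DSetStepN (n + 1) S U

/-- Size of a set of DLAL_* terms: the maximal size of its elements. -/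
noncomputable def ssize (S : Set DTerm) : ℕ := sSup (dsize '' S)

/-! ### Translation of types `(·)⋆ : 𝕋 → 𝕊` (Figure 10) -/

def maxTv : Ty → ℕ
  | .tvar X => X
  | .bit => 0
  | .lolli A B => max (maxTv A) (maxTv B)
  | .arrow A B => max (maxTv A) (maxTv B)
  | .prod A B => max (maxTv A) (maxTv B)
  | .sharp A => maxTv A
  | .sect A => maxTv A
  | .all X A => max X (maxTv A)

/-- `(·)⋆`: translation of PUNQ types to DLAL types. -/
def tstar : Ty → DTy
  | .tvar X => .tvar X
  | .bit => .all 0 (.lolli (.tvar 0) (.lolli (.tvar 0) (.tvar 0)))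
  | .lolli A B => .lolli (tstar A) (tstar B)
  | .arrow A B => .arrow (tstar A) (tstar B)
  | .prod A B =>
      let X := max (maxTv A) (maxTv B) + 1
      .all X (.lolli (.lolli (tstar A) (.lolli (tstar B) (.tvar X))) (.tvar X))
  | .sharp Q => tstar Q
  | .sect A => .sect (tstar A)
  | .all X A => .all X (tstar A)

/-- Pointwise translation of typing contexts. -/
def starCtx (Γ : Ctx Ty) : Ctx DTy := fun x => (Γ x).map tstar

/-! ### Translation of terms `⌊·⌋ : PUNQ → 𝒫(DLAL_*)` (Figure 9) -/

def sApp (S T : Set DTerm) : Set DTerm := {u | ∃ s ∈ S, ∃ t ∈ T, u = .app s t}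

def lamList : List ℕ → DTerm → DTerm
  | [], t => t
  | x :: xs, t => .lam x (lamList xs t)

def appList : DTerm → List ℕ → DTerm
  | t, [] => t
  | t, x :: xs => appList (.app t (.var x)) xs

/-- Apply every element of `S` to elements of `T`, `k` times. -/
def appIter : ℕ → Set DTerm → Set DTerm → Set DTerm
  | 0, S, _ => S
  | k + 1, S, T => sApp (appIter k S T) T

def maxVarD : DTerm → ℕ
  | .var y => y
  | .lam y t => max y (maxVarD t)
  | .app t s => max (maxVarD t) (maxVarD s)
  | .star => 0

/-- Number of free occurrences of `x`. -/
def countOccD (x : ℕ) : DTerm → ℕ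
  | .var y => if y = x then 1 else 0
  | .lam y t => if y = x then 0 else countOccD x t
  | .app t s => countOccD x t + countOccD x s
  | .star => 0

/-- Replace the successive free occurrences of `x` by `base + 0, base + 1, …`,
threading a counter. -/
def dlin (x base : ℕ) : DTerm → ℕ → DTerm × ℕ
  | .var y, c => if y = x then (.var (base + c), c + 1) else (.var y, c)
  | .lam y t, c =>
      if y = x then (.lam y t, c)
      else
        let p := dlin x base t c
        (.lam y p.1, p.2)
  | .app t s, c =>
      let p := dlin x base t c
      let q := dlin x base s p.2
      (.app p.1 q.1, q.2)
  | .star, c => (.star, c)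

/-- Linearization `λx₁…x_k.(s with the occurrences of x split)`. -/
def linOne (x : ℕ) (s : DTerm) : DTerm :=
  lamList ((List.range (countOccD x s)).map fun i => maxVarD s + 1 + i)
    (dlin x (maxVarD s + 1) s 0).1

def linSet (x : ℕ) (S : Set DTerm) : Set DTerm := linOne x '' S

/-- Church pairing `λz.(z s t)` with `z` fresh. -/
def churchPair (s t : DTerm) : DTerm :=
  let z := max (maxVarD s) (maxVarD t) + 1
  .lam z (.app (.app (.var z) s) t)

/-- The translation `⌊·⌋` of PUNQ superpositions into sets of DLAL_* terms
(Figure 9), presented relationally: the list `xs` of λ-closed variables in the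
conditional case and the repetition count `k = η(t₁)` in the application case
are determined by the (implicit) typing derivation and are existentially chosen
here. -/
inductive Tr : Sup → Set DTerm → Prop
  | zero : Tr .zero {DTerm.star}
  | var (x : ℕ) : Tr (.term (.var x)) {DTerm.var x}
  | ket0 : Tr (.term .ket0) {DTerm.lam 0 (.lam 1 (.var 0))}
  | ket1 : Tr (.term .ket1) {DTerm.lam 0 (.lam 1 (.var 1))}
  | smul0 {t : Sup} : Tr (.smul 0 t) {DTerm.star}
  | smul {α : ℂ} {t : Sup} {S : Set DTerm} :
      α ≠ 0 → Tr t S → Tr (.smul α t) S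
  | add {t r : Sup} {S T : Set DTerm} :
      Tr t S → Tr r T → Tr (.add t r) (S ∪ T)
  | pair {t₁ t₂ : Term} {S T : Set DTerm} :
      Tr (.term t₁) S → Tr (.term t₂) T →
      Tr (.term (.pair t₁ t₂)) {u | ∃ s ∈ S, ∃ t ∈ T, u = churchPair s t}
  | lett {x y : ℕ} {t₁ : Term} {b : Sup} {S T : Set DTerm} :
      Tr (.term t₁) S → Tr b T →
      Tr (.term (.lett x y t₁ b)) (sApp S ((fun u => DTerm.lam x (.lam y u)) '' T))
  | cond {t : Term} {s₁ s₂ : Sup} {S S₁ S₂ : Set DTerm} (xs : List ℕ) :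
      Tr (.term t) S → Tr s₁ S₁ → Tr s₂ S₂ →
      Tr (.term (.cond t s₁ s₂))
        ((fun u => appList u xs) '' sApp (sApp S (lamList xs '' S₁)) (lamList xs '' S₂))
  | app {t₁ t₂ : Term} {S T : Set DTerm} (k : ℕ) :
      Tr (.term t₁) S → Tr (.term t₂) T →
      Tr (.term (.app t₁ t₂)) (appIter k S T)
  | lam {x : ℕ} {b : Sup} {B : Set DTerm} :
      Tr b B → Tr (.term (.lam x b)) (linSet x B)


/-!
A superposition denotes a finitely supported vector of amplitudes over terms (`amp`), and `≡`
is exactly equality of these vectors. On amplitudes, one step of `⇝` is the linear map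
`stepMap`, which replaces every term that is not a basis value by its (deterministic)
single-term reduct; a superposition steps exactly when it is not a value and all its terms can
step (`Step.stepSpec`, `Step.of_stepSpec`). Hence `⇝*` is deterministic up to `≡` and linear:
if `sᵢ ⇝* Wᵢ` for all `i`, then `∑ αᵢ sᵢ ⇝* ∑ αᵢ Wᵢ`.

For `λx.t⃗ ∈ ⟦♯(𝔹ⁿ) ⊸ ♯(𝔹ᵏ)⟧`, let `Wᵢ ∈ ⟦♯(𝔹ᵏ)⟧` be the value of `(λx.t⃗) |i⟩`. By linearity
`(λx.t⃗) v⃗ ⇝* ∑ᵢ [[v⃗]]ᵢ Wᵢ`, so `λx.t⃗` represents the linear extension `F` of `|i⟩ ↦ [[Wᵢ]]`.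
Every unit vector is `[[v⃗]]` for some `v⃗ ∈ ⟦♯(𝔹ⁿ)⟧` and every element of `⟦♯(𝔹ᵏ)⟧` has unit
norm, so `F` preserves unit vectors and is an isometry by polarization. An isometry is
injective, which forces `n ≤ k`, and it is bijective when `k = n`.
-/

noncomputable section

/-! ### Amplitudes of superpositions -/

@[simp] def amp : Sup → Term →₀ ℂ
  | .term t => Finsupp.single t 1
  | .zero => 0
  | .smul α s => α • amp s
  | .add s t => amp s + amp t

theorem coeff_eq_amp (v : Term) : ∀ s : Sup, coeff v s = amp s v
  | .term t => by simp [coeff, Finsupp.single_apply, eq_comm]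
  | .zero => rfl
  | .smul α s => by simp [coeff, coeff_eq_amp v s]
  | .add s t => by simp [coeff, coeff_eq_amp v s, coeff_eq_amp v t]

theorem SupEq.amp_eq {s t : Sup} (h : SupEq s t) : amp s = amp t := by
  induction h <;> simp_all [add_comm, add_assoc, smul_smul, add_smul, smul_add]

def terms : Sup → Finset Term
  | .term t => {t}
  | .zero => ∅
  | .smul _ s => terms s
  | .add s t => terms s ∪ terms t

def canon (T : List Term) (f : Term →₀ ℂ) : Sup :=
  T.foldr (fun v acc => .add (.smul (f v) (.term v)) acc) .zero

theorem canon_supEq_zero {T : List Term} {f : Term →₀ ℂ} (h : ∀ v ∈ T, f v = 0) :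
    SupEq (canon T f) .zero := by
  induction T with
  | nil => exact .refl _
  | cons v T ih =>
    simp only [canon, List.foldr_cons, List.mem_cons, forall_eq_or_imp] at h ih ⊢
    rw [h.1]
    exact .trans (.addCongr (.zeroSmul _) (ih h.2)) (.zeroAdd _)

theorem supEq_smul_zero (α : ℂ) : SupEq (.smul α .zero) .zero := by
  refine .trans (.smulCongr α (.symm (.zeroSmul .zero))) (.trans (.smulSmul _ _ _) ?_)
  rw [mul_zero]
  exact .zeroSmul _

theorem canon_smul (T : List Term) (α : ℂ) (f : Term →₀ ℂ) :
    SupEq (canon T (α • f)) (.smul α (canon T f)) := by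
  induction T with
  | nil => exact .symm (supEq_smul_zero α)
  | cons v T ih =>
    exact .trans (.addCongr (.symm (.smulSmul α (f v) (.term v))) ih) (.symm (.smulDist α _ _))

theorem supEq_add_add_comm (a b c d : Sup) :
    SupEq (.add (.add a b) (.add c d)) (.add (.add a c) (.add b d)) :=
  .trans (.addAssoc a b _) <| .trans (.addCongr (.refl a) <| .trans (.symm (.addAssoc b c d)) <|
    .trans (.addCongr (.addComm b c) (.refl d)) (.addAssoc c b d)) (.symm (.addAssoc a c _))

theorem canon_add (T : List Term) (f g : Term →₀ ℂ) :
    SupEq (canon T (f + g)) (.add (canon T f) (canon T g)) := by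
  induction T with
  | nil => exact .symm (.zeroAdd _)
  | cons v T ih =>
    exact .trans (.addCongr (.symm (.smulAddSame _ _ _)) ih) (supEq_add_add_comm _ _ _ _)

theorem canon_single {T : List Term} {u : Term} (hT : T.Nodup) (hu : u ∈ T) :
    SupEq (.term u) (canon T (Finsupp.single u 1)) := by
  induction T with
  | nil => simp at hu
  | cons v T ih =>
    obtain ⟨hvT, hT⟩ := List.nodup_cons.1 hT
    rcases List.mem_cons.1 hu with rfl | hu
    · have hrest : SupEq (canon T (Finsupp.single u 1)) .zero :=
        canon_supEq_zero fun w hw => Finsupp.single_eq_of_ne (by rintro rfl; exact hvT hw)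
      simp only [canon, List.foldr_cons, Finsupp.single_eq_same] at hrest ⊢
      exact .symm (.trans (.addCongr (.oneSmul _) hrest) (.trans (.addComm _ _) (.zeroAdd _)))
    · have hvu : v ≠ u := by rintro rfl; exact hvT hu
      simp only [canon, List.foldr_cons, Finsupp.single_eq_of_ne hvu] at ih ⊢
      exact .trans (ih hT hu) (.symm (.trans (.addCongr (.zeroSmul _) (.refl _)) (.zeroAdd _)))

theorem supEq_canon {T : List Term} (hT : T.Nodup) :
    ∀ s : Sup, (∀ v ∈ terms s, v ∈ T) → SupEq s (canon T (amp s))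
  | .term u, h => canon_single hT (h u (by simp [terms]))
  | .zero, _ => .symm (canon_supEq_zero fun _ _ => rfl)
  | .smul α s, h => .trans (.smulCongr α (supEq_canon hT s h)) (.symm (canon_smul T α _))
  | .add s t, h =>
    .trans (.addCongr (supEq_canon hT s fun v hv => h v (by simp [terms, hv]))
      (supEq_canon hT t fun v hv => h v (by simp [terms, hv]))) (.symm (canon_add T _ _))

theorem SupEq.of_amp_eq {s t : Sup} (h : amp s = amp t) : SupEq s t := by
  have hT := (terms s ∪ terms t).nodup_toList
  have hs := supEq_canon hT s fun v hv => by simp [hv]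
  have ht := supEq_canon hT t fun v hv => by simp [hv]
  rw [h] at hs
  exact .trans hs (.symm ht)

theorem amp_iteS (r₁ r₂ : Sup) :
    ∀ c : Sup, amp (iteS c r₁ r₂) = (amp c).mapDomain (fun t => .cond t r₁ r₂)
  | .term t => by simp [iteS]
  | .zero => by simp [iteS]
  | .smul α c => by simp [iteS, amp_iteS r₁ r₂ c, Finsupp.mapDomain_smul]
  | .add c d => by simp [iteS, amp_iteS r₁ r₂ c, amp_iteS r₁ r₂ d, Finsupp.mapDomain_add]

theorem amp_appSR (t : Term) : ∀ s : Sup, amp (appSR t s) = (amp s).mapDomain (.app t)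
  | .term r => by simp [appSR]
  | .zero => by simp [appSR]
  | .smul α s => by simp [appSR, amp_appSR t s, Finsupp.mapDomain_smul]
  | .add s r => by simp [appSR, amp_appSR t s, amp_appSR t r, Finsupp.mapDomain_add]

theorem amp_appS (u : Sup) :
    ∀ s : Sup, amp (appS s u) = Finsupp.linearCombination ℂ (fun t => amp (appSR t u)) (amp s)
  | .term t => by simp [appS]
  | .zero => by simp [appS]
  | .smul α s => by simp [appS, amp_appS u s]
  | .add s r => by simp [appS, amp_appS u s, amp_appS u r]

theorem amp_pairSR (t : Term) : ∀ s : Sup, amp (pairSR t s) = (amp s).mapDomain (.pair t)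
  | .term r => by simp [pairSR]
  | .zero => by simp [pairSR]
  | .smul α s => by simp [pairSR, amp_pairSR t s, Finsupp.mapDomain_smul]
  | .add s r => by simp [pairSR, amp_pairSR t s, amp_pairSR t r, Finsupp.mapDomain_add]

theorem amp_pairS (u : Sup) :
    ∀ s : Sup, amp (pairS s u) = Finsupp.linearCombination ℂ (fun t => amp (pairSR t u)) (amp s)
  | .term t => by simp [pairS]
  | .zero => by simp [pairS]
  | .smul α s => by simp [pairS, amp_pairS u s]
  | .add s r => by simp [pairS, amp_pairS u s, amp_pairS u r]

theorem amp_letS (x y : ℕ) (b : Sup) :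
    ∀ c : Sup, amp (letS x y c b) = (amp c).mapDomain (fun t => .lett x y t b)
  | .term t => by simp [letS]
  | .zero => by simp [letS]
  | .smul α c => by simp [letS, amp_letS x y b c, Finsupp.mapDomain_smul]
  | .add c d => by simp [letS, amp_letS x y b c, amp_letS x y b d, Finsupp.mapDomain_add]

theorem amp_mkSum : ∀ L : List (ℂ × Term),
    amp (mkSum L) = (L.map fun p => p.1 • Finsupp.single p.2 1).sum
  | [] => rfl
  | [p] => by simp [mkSum]
  | p :: q :: L => by simp [mkSum, amp_mkSum (q :: L)]

theorem amp_mkSumS : ∀ L : List (ℂ × Sup), amp (mkSumS L) = (L.map fun p => p.1 • amp p.2).sum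
  | [] => rfl
  | [p] => by simp [mkSumS]
  | p :: q :: L => by simp [mkSumS, amp_mkSumS (q :: L)]

theorem amp_mkSum_cons (p : ℂ × Term) (L : List (ℂ × Term)) :
    amp (mkSum (p :: L)) = p.1 • Finsupp.single p.2 1 + amp (mkSum L) := by
  simp [amp_mkSum]

theorem amp_mkSum_apply_of_notMem {L : List (ℂ × Term)} {v : Term} (hv : v ∉ L.map Prod.snd) :
    amp (mkSum L) v = 0 := by
  induction L with
  | nil => rfl
  | cons p L ih =>
    simp only [List.map_cons, List.mem_cons, not_or] at hv
    simp [amp_mkSum_cons, ih hv.2, Finsupp.single_eq_of_ne hv.1]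

theorem amp_mkSum_apply {L : List (ℂ × Term)} (hL : (L.map Prod.snd).Nodup) {p : ℂ × Term}
    (hp : p ∈ L) : amp (mkSum L) p.2 = p.1 := by
  induction L with
  | nil => simp at hp
  | cons q L ih =>
    simp only [List.map_cons, List.nodup_cons] at hL
    rcases List.mem_cons.1 hp with rfl | hp
    · simp [amp_mkSum_cons, amp_mkSum_apply_of_notMem hL.1]
    · have hne : q.2 ≠ p.2 := fun h => hL.1 (h ▸ List.mem_map_of_mem hp)
      simp [amp_mkSum_cons, ih hL.2 hp, Finsupp.single_eq_of_ne' hne]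

theorem mem_of_mem_support_amp_mkSum {L : List (ℂ × Term)} {v : Term}
    (hv : v ∈ (amp (mkSum L)).support) : v ∈ L.map Prod.snd := by
  by_contra h
  exact Finsupp.mem_support_iff.1 hv (amp_mkSum_apply_of_notMem h)

/-! ### Reduction acting on amplitudes -/

/-- The rules of Figure 3 other than `sup` and `equ`. -/
inductive TStep : Term → Sup → Prop
  | if0 {s t : Sup} : TStep (.cond .ket0 s t) s
  | if1 {s t : Sup} : TStep (.cond .ket1 s t) t
  | abs {x : ℕ} {b : Sup} {v : Term} :
      BasisValue v → TStep (.app (.lam x b) v) (substS b x (.term v))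
  | lett {x y : ℕ} {v w : Term} {b : Sup} :
      BasisValue v → BasisValue w →
      TStep (.lett x y (.pair v w) b) (substS (substS b x (.term v)) y (.term w))
  | condCong {t : Term} {s r₁ r₂ : Sup} :
      TStep t s → TStep (.cond t r₁ r₂) (iteS s r₁ r₂)
  | appR {r t : Term} {s : Sup} : TStep t s → TStep (.app r t) (appSR r s)
  | appL {t v : Term} {s : Sup} :
      BasisValue v → TStep t s → TStep (.app t v) (appS s (.term v))
  | pairL {t r : Term} {s : Sup} : TStep t s → TStep (.pair t r) (pairS s (.term r))
  | pairR {v t : Term} {s : Sup} :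
      BasisValue v → TStep t s → TStep (.pair v t) (pairS (.term v) s)
  | letCong {x y : ℕ} {t : Term} {s r : Sup} :
      TStep t s → TStep (.lett x y t r) (letS x y s r)

namespace TStep

variable {u : Term} {s s' : Sup}

theorem toStep (h : TStep u s) : Step (.term u) s := by
  induction h with
  | if0 => exact .if0
  | if1 => exact .if1
  | abs hb => exact .abs hb
  | lett hb hb' => exact .lett hb hb'
  | condCong _ ih => exact .condCong ih
  | appR _ ih => exact .appR ih
  | appL hb _ ih => exact .appL hb ih
  | pairL _ ih => exact .pairL ih
  | pairR hb _ ih => exact .pairR hb ih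
  | letCong _ ih => exact .letCong ih

theorem not_basisValue (h : TStep u s) : ¬ BasisValue u := by
  induction h with
  | pairL _ ih => rintro ⟨⟩; exact ih (by assumption)
  | pairR _ _ ih => rintro ⟨⟩; exact ih (by assumption)
  | _ => rintro ⟨⟩

theorem amp_eq (h : TStep u s) (h' : TStep u s') : amp s = amp s' := by
  induction h generalizing s' with
  | if0 => cases h' with
    | if0 => rfl
    | condCong h' => cases h'
  | if1 => cases h' with
    | if1 => rfl
    | condCong h' => cases h'
  | abs hb => cases h' with
    | abs => rfl
    | appR h' => exact absurd hb h'.not_basisValue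
    | appL _ h' => cases h'
  | lett hv hw => cases h' with
    | lett => rfl
    | letCong h' => cases h' with
      | pairL h' => exact absurd hv h'.not_basisValue
      | pairR _ h' => exact absurd hw h'.not_basisValue
  | condCong h ih => cases h' with
    | if0 => cases h
    | if1 => cases h
    | condCong h' => rw [amp_iteS, amp_iteS, ih h']
  | appR h ih => cases h' with
    | abs hb => exact absurd hb h.not_basisValue
    | appR h' => rw [amp_appSR, amp_appSR, ih h']
    | appL hb _ => exact absurd hb h.not_basisValue
  | appL hb h ih => cases h' with
    | abs => cases h
    | appR h' => exact absurd hb h'.not_basisValue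
    | appL _ h' => rw [amp_appS, amp_appS, ih h']
  | pairL h ih => cases h' with
    | pairL h' => rw [amp_pairS, amp_pairS, ih h']
    | pairR hb _ => exact absurd hb h.not_basisValue
  | pairR hb h ih => cases h' with
    | pairL h' => exact absurd hb h'.not_basisValue
    | pairR _ h' => simp only [pairS]; rw [amp_pairSR, amp_pairSR, ih h']
  | letCong h ih => cases h' with
    | lett hv hw => cases h with
      | pairL h => exact absurd hv h.not_basisValue
      | pairR _ h => exact absurd hw h.not_basisValue
    | letCong h' => rw [amp_letS, amp_letS, ih h']

end TStep

theorem eq_singleton_of_amp_mkSum {L : List (ℂ × Term)} (hL : L ≠ []) (hcf : CForm L) {u : Term}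
    (h : amp (mkSum L) = Finsupp.single u 1) : L = [(1, u)] := by
  have hentry : ∀ p ∈ L, p = (1, u) := fun p hp => by
    have hp1 := amp_mkSum_apply hcf.1 hp
    rw [h] at hp1
    by_cases hpu : p.2 = u
    · rw [hpu, Finsupp.single_eq_same] at hp1
      exact Prod.ext hp1.symm hpu
    · rw [Finsupp.single_eq_of_ne hpu] at hp1
      exact absurd hp1.symm (hcf.2 p hp)
  obtain ⟨p, L, rfl⟩ := List.exists_cons_of_ne_nil hL
  obtain rfl := hentry p List.mem_cons_self
  suffices L = [] by rw [this]
  refine List.eq_nil_iff_forall_not_mem.2 fun q hq => ?_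
  have hnd := hcf.1
  simp only [List.map_cons, List.nodup_cons] at hnd
  exact hnd.1 (List.mem_map.2 ⟨q, hq, by rw [hentry q (List.mem_cons_of_mem _ hq)]⟩)

theorem Step.exists_tstep {t s : Sup} (h : Step t s) {u : Term}
    (ht : amp t = Finsupp.single u 1) : ∃ s', TStep u s' ∧ amp s = amp s' := by
  have single_inj := Finsupp.single_left_injective (α := Term) (one_ne_zero (α := ℂ))
  induction h generalizing u with
  | if0 => obtain rfl := single_inj ht; exact ⟨_, .if0, rfl⟩
  | if1 => obtain rfl := single_inj ht; exact ⟨_, .if1, rfl⟩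
  | abs hb => obtain rfl := single_inj ht; exact ⟨_, .abs hb, rfl⟩
  | lett hv hw => obtain rfl := single_inj ht; exact ⟨_, .lett hv hw, rfl⟩
  | condCong _ ih =>
    obtain rfl := single_inj ht
    obtain ⟨s', hs', hs⟩ := ih rfl
    exact ⟨_, .condCong hs', by rw [amp_iteS, amp_iteS, hs]⟩
  | appR _ ih =>
    obtain rfl := single_inj ht
    obtain ⟨s', hs', hs⟩ := ih rfl
    exact ⟨_, .appR hs', by rw [amp_appSR, amp_appSR, hs]⟩
  | appL hb _ ih =>
    obtain rfl := single_inj ht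
    obtain ⟨s', hs', hs⟩ := ih rfl
    exact ⟨_, .appL hb hs', by rw [amp_appS, amp_appS, hs]⟩
  | pairL _ ih =>
    obtain rfl := single_inj ht
    obtain ⟨s', hs', hs⟩ := ih rfl
    exact ⟨_, .pairL hs', by rw [amp_pairS, amp_pairS, hs]⟩
  | pairR hb _ ih =>
    obtain rfl := single_inj ht
    obtain ⟨s', hs', hs⟩ := ih rfl
    exact ⟨_, .pairR hb hs', by simp only [pairS]; rw [amp_pairSR, amp_pairSR, hs]⟩
  | letCong _ ih =>
    obtain rfl := single_inj ht
    obtain ⟨s', hs', hs⟩ := ih rfl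
    exact ⟨_, .letCong hs', by rw [amp_letS, amp_letS, hs]⟩
  | sup l w f hl hcf _ _ ih =>
    obtain ⟨rfl, rfl⟩ : l = [(1, u)] ∧ w = [] := by
      rcases List.append_eq_singleton_iff.1 (eq_singleton_of_amp_mkSum (by simp [hl]) hcf ht) with
        h | h
      exacts [absurd h.1 hl, h]
    obtain ⟨s', hs', hs⟩ := ih ⟨0, by simp⟩ rfl
    exact ⟨s', hs', by simp [mkSumS, mkSum, hs]⟩
  | equ e _ e' ih =>
    obtain ⟨s', hs', hs⟩ := ih (e.amp_eq ▸ ht)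
    exact ⟨s', hs', e'.amp_eq ▸ hs⟩

def ofVec (f : Term →₀ ℂ) : Sup := mkSum (f.support.toList.map fun u => (f u, u))

theorem amp_ofVec (f : Term →₀ ℂ) : amp (ofVec f) = f := by
  rw [ofVec, amp_mkSum, List.map_map]
  conv_rhs => rw [← Finsupp.sum_single f]
  simp [Function.comp_def, Finsupp.sum]

theorem value_mkSum {L : List (ℂ × Term)} (h : ∀ p ∈ L, BasisValue p.2) : Value (mkSum L) := by
  induction L with
  | nil => exact .zero
  | cons p L ih =>
    cases L with
    | nil => exact .smul _ (.basis (h p (by simp)))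
    | cons q L => exact .add (.smul _ (.basis (h p (by simp)))) (ih fun r hr => h r (by simp [hr]))

def IsBasisSupported (f : Term →₀ ℂ) : Prop := ∀ u ∈ f.support, BasisValue u

def CanStep (f : Term →₀ ℂ) : Prop := ∀ u ∈ f.support, ¬ BasisValue u → ∃ s, TStep u s

theorem isBasisSupported_single_iff {u : Term} :
    IsBasisSupported (Finsupp.single u 1) ↔ BasisValue u := by
  simp [IsBasisSupported]

theorem canStep_single_iff {u : Term} :
    CanStep (Finsupp.single u 1) ↔ (¬ BasisValue u → ∃ s, TStep u s) := by
  simp [CanStep]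

theorem Value.isBasisSupported {v : Sup} (hv : Value v) : IsBasisSupported (amp v) := by
  induction hv with
  | basis hb => exact isBasisSupported_single_iff.2 hb
  | zero => simp [IsBasisSupported]
  | smul α _ ih => exact fun u hu => ih u (Finsupp.support_smul hu)
  | add _ _ ihs iht =>
    exact fun u hu => (Finset.mem_union.1 (Finsupp.support_add hu)).elim (ihs u) (iht u)

theorem value_ofVec {f : Term →₀ ℂ} (hf : IsBasisSupported f) : Value (ofVec f) :=
  value_mkSum fun p hp => by
    obtain ⟨u, hu, rfl⟩ := List.mem_map.1 hp
    exact hf u (Finset.mem_toList.1 hu)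

/-- A chosen single-term reduct of `u` (junk `zero` if `u` cannot step). -/
def reduct (u : Term) : Sup := if h : ∃ s, TStep u s then h.choose else .zero

theorem TStep.reduct {u : Term} {s : Sup} (h : TStep u s) : TStep u (reduct u) := by
  rw [PUNQFormal.reduct, dif_pos ⟨s, h⟩]
  exact Exists.choose_spec _

/-- The action of `⇝` on amplitudes (see `Step.stepSpec` and `Step.of_stepSpec`). -/
def stepMap : Module.End ℂ (Term →₀ ℂ) :=
  Finsupp.linearCombination ℂ fun u => if BasisValue u then Finsupp.single u 1 else amp (reduct u)

theorem stepMap_single_of_basisValue {u : Term} (hu : BasisValue u) :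
    stepMap (Finsupp.single u 1) = Finsupp.single u 1 := by
  simp [stepMap, hu]

theorem TStep.stepMap_single {u : Term} {s : Sup} (h : TStep u s) :
    stepMap (Finsupp.single u 1) = amp s := by
  simp [stepMap, h.not_basisValue, h.reduct.amp_eq h]

theorem stepMap_eq_self {f : Term →₀ ℂ} (hf : IsBasisSupported f) : stepMap f = f := by
  conv_rhs => rw [← Finsupp.sum_single f]
  rw [stepMap, Finsupp.linearCombination_apply]
  exact Finset.sum_congr rfl fun u hu => by simp [hf u hu]

theorem stepMap_pow_eq_self {f : Term →₀ ℂ} (hf : IsBasisSupported f) (j : ℕ) :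
    (stepMap ^ j) f = f := by
  rw [Module.End.pow_apply]
  exact Function.iterate_fixed (stepMap_eq_self hf) j

def StepSpec (t s : Sup) : Prop :=
  ¬ IsBasisSupported (amp t) ∧ CanStep (amp t) ∧ amp s = stepMap (amp t)

theorem stepSpec_term {u : Term} {s : Sup} (h : Step (.term u) s) : StepSpec (.term u) s := by
  obtain ⟨s', hs', hs⟩ := h.exists_tstep rfl
  exact ⟨isBasisSupported_single_iff.not.2 hs'.not_basisValue,
    canStep_single_iff.2 fun _ => ⟨s', hs'⟩, hs.trans hs'.stepMap_single.symm⟩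

theorem stepSpec_sup {l w : List (ℂ × Term)} {f : ℕ → Sup} (hl : l ≠ []) (hcf : CForm (l ++ w))
    (hw : ∀ p ∈ w, BasisValue p.2) (hf : ∀ i : Fin l.length, StepSpec (.term (l.get i).2) (f i)) :
    StepSpec (mkSum (l ++ w))
      (.add (mkSumS ((List.range l.length).map fun i => ((l.getD i (0, Term.ket0)).1, f i)))
        (mkSum w)) := by
  have hl' : ∀ i : Fin l.length, ¬ BasisValue (l.get i).2 :=
    fun i => isBasisSupported_single_iff.not.1 (hf i).1
  refine ⟨fun hB => ?_, fun u hu hub => ?_, ?_⟩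
  · obtain ⟨p, hp⟩ := List.exists_mem_of_ne_nil l hl
    obtain ⟨i, rfl⟩ := List.get_of_mem hp
    refine hl' i (hB _ (Finsupp.mem_support_iff.2 ?_))
    rw [amp_mkSum_apply hcf.1 (List.mem_append_left w hp)]
    exact hcf.2 _ (List.mem_append_left w hp)
  · obtain ⟨p, hp, rfl⟩ := List.mem_map.1 (mem_of_mem_support_amp_mkSum hu)
    rcases List.mem_append.1 hp with hp | hp
    · obtain ⟨i, rfl⟩ := List.get_of_mem hp
      exact canStep_single_iff.1 (hf i).2.1 hub
    · exact absurd (hw p hp) hub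
  · have hl_sum : (List.range l.length).map
          ((fun p : ℂ × Sup => p.1 • amp p.2) ∘ fun i => ((l.getD i (0, Term.ket0)).1, f i))
        = l.map (⇑stepMap ∘ fun p => p.1 • Finsupp.single p.2 1) := by
      refine List.ext_getElem (by simp) fun i hi _ => ?_
      simp only [List.length_map, List.length_range] at hi
      simp only [List.getElem_map, List.getElem_range, Function.comp, List.getD_eq_getElem _ _ hi,
        map_smul, (hf ⟨i, hi⟩).2.2]
      rfl
    have hw_sum : w.map (⇑stepMap ∘ fun p => p.1 • Finsupp.single p.2 1)
        = w.map fun p => p.1 • Finsupp.single p.2 1 :=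
      List.map_congr_left fun p hp => by
        simp only [Function.comp, map_smul, stepMap_single_of_basisValue (hw p hp)]
    rw [amp, amp_mkSumS, amp_mkSum, amp_mkSum, List.map_append, List.sum_append, map_add,
      map_list_sum, map_list_sum, List.map_map, List.map_map, List.map_map]
    exact congrArg₂ (· + ·) (congrArg List.sum hl_sum) (congrArg List.sum hw_sum).symm

theorem Step.stepSpec {t s : Sup} (h : Step t s) : StepSpec t s := by
  induction h with
  | if0 => exact stepSpec_term .if0
  | if1 => exact stepSpec_term .if1
  | abs hb => exact stepSpec_term (.abs hb)
  | lett hv hw => exact stepSpec_term (.lett hv hw)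
  | condCong h _ => exact stepSpec_term (.condCong h)
  | appR h _ => exact stepSpec_term (.appR h)
  | appL hb h _ => exact stepSpec_term (.appL hb h)
  | pairL h _ => exact stepSpec_term (.pairL h)
  | pairR hb h _ => exact stepSpec_term (.pairR hb h)
  | letCong h _ => exact stepSpec_term (.letCong h)
  | sup l w f hl hcf _ hw ih => exact stepSpec_sup hl hcf hw ih
  | equ e _ e' ih =>
    rw [StepSpec, e.amp_eq, ← e'.amp_eq]
    exact ih

theorem Step.of_stepSpec {X Y : Sup} (h : StepSpec X Y) : Step X Y := by
  obtain ⟨hX, hc, hY⟩ := h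
  -- `X ≡ ∑_{u ∈ supp} (amp X u)·u`; the rule `sup` reduces the redexes `l` of this sum and keeps
  -- its basis values `w`.
  set L := (amp X).support.toList.map fun u => (amp X u, u)
  set l := L.filter fun p => decide (¬ BasisValue p.2)
  set w := L.filter fun p => !decide (¬ BasisValue p.2)
  have hperm : (l ++ w).Perm L := List.filter_append_perm _ _
  have hmem : ∀ {p}, p ∈ l ++ w → p.2 ∈ (amp X).support ∧ p.1 = amp X p.2 := fun hp => by
    obtain ⟨u, hu, rfl⟩ := List.mem_map.1 (hperm.mem_iff.1 hp)
    exact ⟨Finset.mem_toList.1 hu, rfl⟩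
  have hcf : CForm (l ++ w) := by
    refine ⟨(hperm.map Prod.snd).nodup_iff.2 ?_, fun p hp => ?_⟩
    · simpa [L, List.map_map, Function.comp_def] using (amp X).support.nodup_toList
    · rw [(hmem hp).2]
      exact Finsupp.mem_support_iff.1 (hmem hp).1
  have hl : l ≠ [] := by
    obtain ⟨u, hu, hub⟩ : ∃ u ∈ (amp X).support, ¬ BasisValue u := by
      simpa [IsBasisSupported] using hX
    exact List.ne_nil_of_mem (List.mem_filter.2
      ⟨List.mem_map.2 ⟨u, Finset.mem_toList.2 hu, rfl⟩, by simpa using hub⟩)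
  have hstep : ∀ i : Fin l.length,
      Step (.term (l.get i).2) (reduct (l.getD i (0, Term.ket0)).2) := fun i => by
    have hi : l.get i ∈ l ++ w := List.mem_append_left _ (List.get_mem l i)
    have hub : ¬ BasisValue (l.get i).2 := by simpa using (List.mem_filter.1 (List.get_mem l i)).2
    obtain ⟨s, hs⟩ := hc _ (hmem hi).1 hub
    rw [List.getD_eq_get]
    exact hs.reduct.toStep
  have hw : ∀ p ∈ w, BasisValue p.2 := fun p hp => by simpa using (List.mem_filter.1 hp).2
  have hsup := Step.sup l w (fun i => reduct (l.getD i (0, Term.ket0)).2) hl hcf hstep hw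
  have hX' : amp (mkSum (l ++ w)) = amp X := by
    rw [← amp_ofVec (amp X), ofVec, amp_mkSum, amp_mkSum, hperm.map _ |>.sum_eq]
  refine .equ (.of_amp_eq hX'.symm) hsup (.of_amp_eq ?_)
  rw [hY, hsup.stepSpec.2.2, hX']

theorem forall_mem_support_sum {ι : Type*} [Fintype ι] {P : Term → Prop} (α : ι → ℂ)
    {f : ι → Term →₀ ℂ} (hf : ∀ i, ∀ u ∈ (f i).support, P u) :
    ∀ u ∈ (∑ i, α i • f i).support, P u := fun u hu => by
  obtain ⟨i, -, hi⟩ := Finset.mem_biUnion.1 (Finsupp.support_finsetSum hu)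
  exact hf i u (Finsupp.support_smul hi)

theorem StepStar.exists_pow {t s : Sup} (h : StepStar t s) :
    ∃ m, amp s = (stepMap ^ m) (amp t) := by
  induction h with
  | refl => exact ⟨0, rfl⟩
  | tail _ hstep ih =>
    obtain ⟨m, hm⟩ := ih
    refine ⟨m + 1, ?_⟩
    rw [pow_succ', Module.End.mul_apply, ← hm]
    exact hstep.stepSpec.2.2

theorem StepStar.pow_eq_of_value {t V : Sup} (h : StepStar t V) (hV : Value V) :
    ∃ m, ∀ j, m ≤ j → (stepMap ^ j) (amp t) = amp V := by
  obtain ⟨m, hm⟩ := h.exists_pow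
  refine ⟨m, fun j hj => ?_⟩
  rw [← Nat.sub_add_cancel hj, pow_add, Module.End.mul_apply, ← hm,
    stepMap_pow_eq_self hV.isBasisSupported]

theorem StepStar.amp_eq_of_value {t V W : Sup} (hV : StepStar t V) (hW : StepStar t W)
    (hVv : Value V) (hWv : Value W) : amp V = amp W := by
  obtain ⟨m, hm⟩ := hV.pow_eq_of_value hVv
  obtain ⟨m', hm'⟩ := hW.pow_eq_of_value hWv
  rw [← hm (max m m') (le_max_left _ _), hm' _ (le_max_right _ _)]

theorem StepStar.canStep_pow {s W : Sup} (h : StepStar s W) (hW : Value W) :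
    ∀ j, CanStep ((stepMap ^ j) (amp s)) := by
  induction h using Relation.ReflTransGen.head_induction_on with
  | refl =>
    intro j u hu hub
    rw [stepMap_pow_eq_self hW.isBasisSupported] at hu
    exact absurd (hW.isBasisSupported u hu) hub
  | head hstep _ ih =>
    rintro (_ | j)
    · exact hstep.stepSpec.2.1
    · rw [pow_succ, Module.End.mul_apply, ← hstep.stepSpec.2.2]
      exact ih j

theorem stepStar_of_pow (K : ℕ) : ∀ {X W : Sup}, ¬ IsBasisSupported (amp X) →
    (∀ j, CanStep ((stepMap ^ j) (amp X))) → IsBasisSupported (amp W) →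
    amp W = (stepMap ^ K) (amp X) → StepStar X W := by
  induction K with
  | zero => exact fun hX _ hW hK => absurd (by rwa [hK, pow_zero, Module.End.one_apply] at hW) hX
  | succ K ih =>
    intro X W hX hc hW hK
    rw [pow_succ, Module.End.mul_apply] at hK
    -- The last step has to land on `W` itself, not just on a superposition `≡ W`.
    by_cases hY : IsBasisSupported (stepMap (amp X))
    · rw [stepMap_pow_eq_self hY] at hK
      exact .single (.of_stepSpec ⟨hX, hc 0, hK⟩)
    · have hstep : Step X (ofVec (stepMap (amp X))) := .of_stepSpec ⟨hX, hc 0, amp_ofVec _⟩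
      refine .head hstep (ih ?_ (fun j => ?_) hW ?_) <;> rw [amp_ofVec]
      · exact hY
      · simpa [pow_succ, Module.End.mul_apply] using hc (j + 1)
      · exact hK

theorem stepStar_of_sum {ι : Type*} [Fintype ι] {s W : ι → Sup}
    (hs : ∀ i, StepStar (s i) (W i)) (hW : ∀ i, Value (W i)) (α : ι → ℂ) {X Y : Sup}
    (hX : amp X = ∑ i, α i • amp (s i)) (hXb : ¬ IsBasisSupported (amp X))
    (hY : amp Y = ∑ i, α i • amp (W i)) : StepStar X Y := by
  choose m hm using fun i => (hs i).pow_eq_of_value (hW i)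
  have hpow : ∀ j, (stepMap ^ j) (amp X) = ∑ i, α i • (stepMap ^ j) (amp (s i)) := fun j => by
    simp [hX, map_sum]
  refine stepStar_of_pow (Finset.univ.sup m) hXb (fun j => ?_) ?_ ?_
  · rw [hpow]
    exact forall_mem_support_sum α fun i => (hs i).canStep_pow (hW i) j
  · rw [hY]
    exact forall_mem_support_sum α fun i => (hW i).isBasisSupported
  · rw [hpow, hY]
    exact Finset.sum_congr rfl fun i _ => by rw [hm i _ (Finset.le_sup (Finset.mem_univ i))]

/-! ### The semantics of `♯(𝔹ⁿ)` -/

theorem ketBit_inj {a b : Bool} : ketBit a = ketBit b ↔ a = b := by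
  cases a <;> cases b <;> simp [ketBit]

theorem ketN_eq_ketN_iff : ∀ {n : ℕ}, 1 ≤ n → ∀ {i j : ℕ},
    ketN n i = ketN n j ↔ ∀ t < n, i.testBit t = j.testBit t
  | 1, _, i, j => by simp [ketN, ketBit_inj]
  | n + 2, _, i, j => by
    rw [ketN, ketN, Term.pair.injEq, ketBit_inj, ketN_eq_ketN_iff (by omega),
      Nat.forall_lt_succ_right (n := n + 1), and_comm]

theorem ketN_injective {n : ℕ} (hn : 1 ≤ n) : Function.Injective fun i : Fin (2 ^ n) => ketN n i :=
  fun i j h => Fin.ext <| Nat.eq_of_testBit_eq fun t => by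
    by_cases ht : t < n
    · exact (ketN_eq_ketN_iff hn).1 h t ht
    · have h2 : 2 ^ n ≤ 2 ^ t := Nat.pow_le_pow_right two_pos (by omega)
      rw [Nat.testBit_lt_two_pow (i.2.trans_le h2), Nat.testBit_lt_two_pow (j.2.trans_le h2)]

theorem basisValue_ketBit (b : Bool) : BasisValue (ketBit b) := by
  cases b
  exacts [.ket0, .ket1]

theorem basisValue_ketN : ∀ n i : ℕ, BasisValue (ketN n i)
  | 0, _ => .ket0
  | 1, _ => basisValue_ketBit _
  | n + 2, i => .pair (basisValue_ketBit _) (basisValue_ketN (n + 1) i)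

theorem fvT_ketBit (b : Bool) : fvT (ketBit b) = ∅ := by
  cases b <;> rfl

theorem fvT_ketN : ∀ n i : ℕ, fvT (ketN n i) = ∅
  | 0, _ => rfl
  | 1, _ => fvT_ketBit _
  | n + 2, i => by
    show fvT (ketBit _) ∪ fvT (ketN (n + 1) i) = ∅
    rw [fvT_ketBit, fvT_ketN (n + 1) i, Finset.union_empty]

theorem sem_bitsTy : ∀ {n : ℕ}, 1 ≤ n →
    sem (bitsTy n) emptyVal = Set.range fun i : Fin (2 ^ n) => Sup.term (ketN n i)
  | 1, _ => by
    ext s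
    simp [bitsTy, sem, Fin.exists_fin_two, ketN, ketBit, eq_comm]
  | n + 2, _ => by
    ext s
    simp only [bitsTy, sem, sem_bitsTy (n := n + 1) (by omega), Set.mem_ofPred_eq,
      Set.mem_insert_iff, Set.mem_singleton_iff, Set.mem_range]
    constructor
    · rintro ⟨v, hv, _, ⟨j, rfl⟩, rfl⟩
      obtain ⟨b, rfl⟩ : ∃ b, v = .term (ketBit b) :=
        hv.elim (fun h => ⟨false, h⟩) (fun h => ⟨true, h⟩)
      have hi : 2 ^ (n + 1) * b.toNat + j < 2 ^ (n + 2) := by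
        have := j.2
        have := b.toNat_le
        rw [pow_succ 2 (n + 1)]
        nlinarith
      refine ⟨⟨_, hi⟩, ?_⟩
      simp only [pairS, pairSR, ketN, Sup.term.injEq, Term.pair.injEq]
      refine ⟨ketBit_inj.2 ?_, ?_⟩
      · cases b <;> simp [Nat.testBit_two_pow_add_eq, Nat.testBit_lt_two_pow j.2]
      refine (ketN_eq_ketN_iff (by omega)).2 fun t ht => ?_
      simp [Nat.testBit_two_pow_mul_add _ j.2, ht]
    · rintro ⟨i, rfl⟩
      refine ⟨.term (ketBit (i.1.testBit (n + 1))), by cases i.1.testBit (n + 1) <;> simp [ketBit],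
        .term (ketN (n + 1) (i % 2 ^ (n + 1))), ⟨⟨_, Nat.mod_lt _ (by positivity)⟩, rfl⟩, ?_⟩
      simp only [pairS, pairSR, ketN, Sup.term.injEq, Term.pair.injEq, true_and]
      refine (ketN_eq_ketN_iff (by omega)).2 fun t ht => ?_
      simp [Nat.testBit_mod_two_pow, ht]

def ketVec (n : ℕ) : (Fin (2 ^ n) → ℂ) →ₗ[ℂ] (Term →₀ ℂ) :=
  Fintype.linearCombination ℂ fun i => Finsupp.single (ketN n i) 1

theorem ketVec_apply_ketN {n : ℕ} (hn : 1 ≤ n) (α : Fin (2 ^ n) → ℂ) (i : Fin (2 ^ n)) :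
    ketVec n α (ketN n i) = α i := by
  simp [ketVec, Fintype.linearCombination_apply, Finsupp.single_apply,
    (ketN_injective hn).eq_iff]

theorem eq_ketVec_of_support_subset {n : ℕ} (hn : 1 ≤ n) {f : Term →₀ ℂ}
    (hf : ↑f.support ⊆ Set.range fun i : Fin (2 ^ n) => ketN n i) :
    f = ketVec n fun i => f (ketN n i) := by
  ext u
  by_cases hu : u ∈ Set.range fun i : Fin (2 ^ n) => ketN n i
  · obtain ⟨i, rfl⟩ := hu
    rw [ketVec_apply_ketN hn]
  · rw [Finsupp.notMem_support_iff.1 fun h => hu (hf h)]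
    simp only [ketVec, Fintype.linearCombination_apply, Finsupp.coe_finsetSum, Finset.sum_apply,
      Finsupp.coe_smul, Pi.smul_apply]
    exact (Finset.sum_eq_zero fun i _ => by
      rw [Finsupp.single_eq_of_ne fun h => hu ⟨i, h.symm⟩, smul_zero]).symm

theorem lmap_apply (n : ℕ) (v : Sup) (i : Fin (2 ^ n)) : lmap n v i = amp v (ketN n i) :=
  coeff_eq_amp _ _

theorem lmap_ofVec_ketVec {n : ℕ} (hn : 1 ≤ n) (α : Fin (2 ^ n) → ℂ) :
    lmap n (ofVec (ketVec n α)) = α :=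
  funext fun i => by rw [lmap_apply, amp_ofVec, ketVec_apply_ketN hn]

theorem inn_eq_sum (w : Sup) : ∀ s : Sup, inn s w = (amp s).sum fun u a => star a * amp w u
  | .term v => by simp [inn, coeff_eq_amp]
  | .zero => rfl
  | .smul α s => by
    simp [inn, inn_eq_sum w s, Finsupp.sum_smul_index', Finsupp.mul_sum, mul_assoc]
  | .add s t => by
    simp [inn, inn_eq_sum w s, inn_eq_sum w t, Finsupp.sum_add_index', add_mul]

theorem inn_self_eq_cInner {n : ℕ} {w : Sup} (hw : amp w = ketVec n (lmap n w)) :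
    inn w w = cInner (lmap n w) (lmap n w) := by
  rw [inn_eq_sum, congrArg (fun f : Term →₀ ℂ => f.sum fun u a => star a * amp w u) hw, ketVec,
    Fintype.linearCombination_apply,
    ← Finsupp.sum_finsetSum_index (fun _ => by simp) (fun _ _ _ => by simp [add_mul])]
  simp [Finsupp.sum_single_index, cInner, lmap_apply]

theorem cInner_self_eq_one_iff {m : ℕ} (u : Fin m → ℂ) :
    cInner u u = 1 ↔ ‖cInner u u‖ ^ 2 = 1 := by
  have h : cInner u u = ((∑ i, Complex.normSq (u i) : ℝ) : ℂ) := by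
    simp [cInner, Complex.normSq_eq_conj_mul_self]
  have hnn : 0 ≤ ∑ i, Complex.normSq (u i) := Finset.sum_nonneg fun i _ => Complex.normSq_nonneg _
  rw [h, Complex.norm_real, Real.norm_of_nonneg hnn, pow_eq_one_iff_of_nonneg hnn two_ne_zero]
  exact_mod_cast Iff.rfl

theorem cInner_single_one {m : ℕ} (i : Fin m) :
    cInner (Pi.single i 1) (Pi.single i (1 : ℂ)) = 1 := by
  simp [cInner, Pi.single_apply]

theorem mem_sem_sharp_bitsTy {n : ℕ} (hn : 1 ≤ n) {w : Sup} :
    w ∈ sem (.sharp (bitsTy n)) emptyVal ↔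
      Value w ∧ ClosedS w ∧ amp w = ketVec n (lmap n w) ∧ cInner (lmap n w) (lmap n w) = 1 := by
  simp only [sem, Set.mem_inter_iff, spanS, S1, Set.mem_ofPred_eq, sem_bitsTy hn]
  constructor
  · rintro ⟨⟨l, hl, hwl⟩, hv, hc, hnorm⟩
    have hket : amp w = ketVec n (lmap n w) := by
      refine (eq_ketVec_of_support_subset hn ?_).trans
        (congrArg _ (funext fun i => (lmap_apply n w i).symm))
      rw [← Finsupp.mem_supported ℂ, hwl.amp_eq, amp_mkSumS]
      refine list_sum_mem fun f hf => ?_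
      obtain ⟨p, hp, rfl⟩ := List.mem_map.1 hf
      obtain ⟨i, hi⟩ := hl p hp
      rw [← hi]
      exact Submodule.smul_mem _ _ (Finsupp.single_mem_supported ℂ _ ⟨i, rfl⟩)
    exact ⟨hv, hc, hket, (cInner_self_eq_one_iff _).2 (inn_self_eq_cInner hket ▸ hnorm)⟩
  · rintro ⟨hv, hc, hket, hnorm⟩
    refine ⟨⟨(List.finRange (2 ^ n)).map fun i => (lmap n w i, .term (ketN n i)), ?_, ?_⟩,
      hv, hc, inn_self_eq_cInner hket ▸ (cInner_self_eq_one_iff _).1 hnorm⟩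
    · simp
    · refine .of_amp_eq ?_
      rw [hket, amp_mkSumS]
      simp [ketVec, Fintype.linearCombination_apply, Fin.sum_univ_def, Function.comp_def]

theorem fvS_mkSum {L : List (ℂ × Term)} (h : ∀ p ∈ L, fvT p.2 = ∅) : fvS (mkSum L) = ∅ := by
  induction L with
  | nil => rfl
  | cons p L ih =>
    have hp : fvS (.smul p.1 (.term p.2)) = ∅ := h p List.mem_cons_self
    cases L with
    | nil => exact hp
    | cons q L =>
      show fvS (.smul p.1 (.term p.2)) ∪ fvS (mkSum (q :: L)) = ∅
      rw [hp, ih fun r hr => h r (List.mem_cons_of_mem _ hr), Finset.union_empty]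

theorem exists_ketN_eq_of_mem_support_ketVec {n : ℕ} {α : Fin (2 ^ n) → ℂ} :
    ∀ u ∈ (ketVec n α).support, ∃ i : Fin (2 ^ n), ketN n i = u := by
  rw [ketVec, Fintype.linearCombination_apply]
  exact forall_mem_support_sum α fun i u hu => ⟨i, ((Finsupp.mem_support_single _ _ _).1 hu).1.symm⟩

theorem isBasisSupported_ketVec {n : ℕ} (α : Fin (2 ^ n) → ℂ) : IsBasisSupported (ketVec n α) :=
  fun u hu => by
    obtain ⟨i, rfl⟩ := exists_ketN_eq_of_mem_support_ketVec u hu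
    exact basisValue_ketN n i

theorem ofVec_ketVec_mem_sem {n : ℕ} (hn : 1 ≤ n) {α : Fin (2 ^ n) → ℂ} (hα : cInner α α = 1) :
    ofVec (ketVec n α) ∈ sem (.sharp (bitsTy n)) emptyVal := by
  refine (mem_sem_sharp_bitsTy hn).2
    ⟨value_ofVec (isBasisSupported_ketVec α), fvS_mkSum fun p hp => ?_, ?_, ?_⟩
  · obtain ⟨u, hu, rfl⟩ := List.mem_map.1 hp
    obtain ⟨i, rfl⟩ := exists_ketN_eq_of_mem_support_ketVec u (Finset.mem_toList.1 hu)
    exact fvT_ketN n i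
  · rw [lmap_ofVec_ketVec hn, amp_ofVec]
  · rwa [lmap_ofVec_ketVec hn]

/-! ### Isometries -/

theorem cInner_eq_inner {m : ℕ} (u v : Fin m → ℂ) :
    cInner u v = inner ℂ (WithLp.toLp 2 u : EuclideanSpace ℂ (Fin m)) (WithLp.toLp 2 v) := by
  simp [cInner, PiLp.inner_apply, mul_comm]

namespace IsIsometricOp

variable {n k : ℕ} {F : (Fin n → ℂ) →ₗ[ℂ] (Fin k → ℂ)}

theorem injective (hF : IsIsometricOp F) : Function.Injective F := by
  refine (injective_iff_map_eq_zero F).2 fun u hu => ?_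
  have h := hF u u
  rw [hu, cInner_eq_inner, cInner_eq_inner, WithLp.toLp_zero, inner_zero_left, eq_comm,
    inner_self_eq_zero] at h
  simpa using h

theorem le (hF : IsIsometricOp F) : n ≤ k := by
  simpa using LinearMap.finrank_le_finrank_of_injective hF.injective

theorem of_cInner_self_eq_one (hF : ∀ u, cInner u u = 1 → cInner (F u) (F u) = 1) :
    IsIsometricOp F := by
  let G : EuclideanSpace ℂ (Fin n) →ₗ[ℂ] EuclideanSpace ℂ (Fin k) :=
    (WithLp.linearEquiv 2 ℂ _).symm.toLinearMap ∘ₗ F ∘ₗ (WithLp.linearEquiv 2 ℂ _).toLinearMap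
  have hunit : ∀ x, ‖x‖ = 1 → ‖G x‖ = 1 := fun x hx => by
    have h := hF x.ofLp <| by
      rw [cInner_eq_inner, WithLp.toLp_ofLp, inner_self_eq_norm_sq_to_K, hx]
      simp
    rw [cInner_eq_inner, inner_self_eq_norm_sq_to_K, ← RCLike.ofReal_pow, ← RCLike.ofReal_one,
      RCLike.ofReal_inj] at h
    exact (pow_eq_one_iff_of_nonneg (norm_nonneg _) two_ne_zero).1 h
  have hnorm : ∀ x, ‖G x‖ = ‖x‖ := fun x => by
    rcases eq_or_ne x 0 with rfl | hx
    · simp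
    have hx' : ‖x‖ ≠ 0 := norm_ne_zero_iff.2 hx
    have hy := hunit (((‖x‖⁻¹ : ℝ) : ℂ) • x) (by simp [norm_smul, hx'])
    rw [map_smul, norm_smul, Complex.norm_real, norm_inv, norm_norm, inv_mul_eq_one₀ hx'] at hy
    exact hy.symm
  intro u v
  rw [cInner_eq_inner, cInner_eq_inner]
  exact (LinearMap.norm_map_iff_inner_map_map G).1 hnorm (WithLp.toLp 2 u) (WithLp.toLp 2 v)

end IsIsometricOp

theorem not_isBasisSupported_mapDomain_app (t : Term) {f : Term →₀ ℂ} (hf : f ≠ 0) :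
    ¬ IsBasisSupported (f.mapDomain (.app t)) := fun h => by
  obtain ⟨u, hu⟩ := Finsupp.support_nonempty_iff.2 hf
  have happ : Function.Injective (Term.app t) := fun _ _ h => (Term.app.inj h).2
  have hnb : ¬ BasisValue (.app t u) := by rintro ⟨⟩
  refine hnb (h _ ?_)
  rwa [Finsupp.mem_support_iff, Finsupp.mapDomain_apply happ, ← Finsupp.mem_support_iff]

/-! ### The operator represented by a term -/

theorem amp_appS_of_mem_sem {n : ℕ} (hn : 1 ≤ n) (t : Term) {v : Sup}
    (hv : v ∈ sem (.sharp (bitsTy n)) emptyVal) :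
    amp (appS (.term t) v) = (Finsupp.lmapDomain ℂ ℂ (Term.app t) ∘ₗ ketVec n) (lmap n v) := by
  rw [show appS (.term t) v = appSR t v from rfl, amp_appSR, ((mem_sem_sharp_bitsTy hn).1 hv).2.2.1]
  rfl

def linearExtension (k : ℕ) {n : ℕ} (W : Fin (2 ^ n) → Sup) :
    (Fin (2 ^ n) → ℂ) →ₗ[ℂ] (Fin (2 ^ k) → ℂ) :=
  Fintype.linearCombination ℂ fun i => lmap k (W i)

section LinearExtension

variable {n k : ℕ} {t : Term} {W : Fin (2 ^ n) → Sup}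

theorem stepStar_appS_of_amp_eq (hn : 1 ≤ n) (hk : 1 ≤ k)
    (hW : ∀ i, W i ∈ sem (.sharp (bitsTy k)) emptyVal)
    (hWt : ∀ i, StepStar (appS (.term t) (ofVec (ketVec n (Pi.single i 1)))) (W i))
    {v w : Sup} (hv : v ∈ sem (.sharp (bitsTy n)) emptyVal)
    (hwv : amp w = ketVec k (linearExtension k W (lmap n v))) : StepStar (appS (.term t) v) w := by
  have hv1 := ((mem_sem_sharp_bitsTy hn).1 hv).2.2.2
  refine stepStar_of_sum hWt (fun i => ((mem_sem_sharp_bitsTy hk).1 (hW i)).1) (lmap n v) ?_ ?_ ?_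
  · conv_lhs => rw [amp_appS_of_mem_sem hn t hv, pi_eq_sum_univ' (lmap n v), map_sum]
    refine Finset.sum_congr rfl fun i _ => ?_
    rw [map_smul, amp_appS_of_mem_sem hn t (ofVec_ketVec_mem_sem hn (cInner_single_one i)),
      lmap_ofVec_ketVec hn]
  · rw [show appS (.term t) v = appSR t v from rfl, amp_appSR]
    refine not_isBasisSupported_mapDomain_app t fun h0 => ?_
    simp [cInner, lmap_apply, h0] at hv1
  · simp [hwv, linearExtension, Fintype.linearCombination_apply,
      fun i => ((mem_sem_sharp_bitsTy hk).1 (hW i)).2.2.1]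

theorem lmap_eq_of_stepStar_appS (hn : 1 ≤ n) (hk : 1 ≤ k)
    (hW : ∀ i, W i ∈ sem (.sharp (bitsTy k)) emptyVal)
    (hWt : ∀ i, StepStar (appS (.term t) (ofVec (ketVec n (Pi.single i 1)))) (W i))
    {v w : Sup} (hv : v ∈ sem (.sharp (bitsTy n)) emptyVal) (hw : Value w)
    (hvw : StepStar (appS (.term t) v) w) : lmap k w = linearExtension k W (lmap n v) := by
  have hW' : Value (ofVec (ketVec k (linearExtension k W (lmap n v)))) :=
    value_ofVec (isBasisSupported_ketVec _)
  have hamp := hvw.amp_eq_of_value (stepStar_appS_of_amp_eq hn hk hW hWt hv (amp_ofVec _)) hw hW'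
  funext j
  rw [lmap_apply, hamp, amp_ofVec, ketVec_apply_ketN hk]

theorem represents_linearExtension (hn : 1 ≤ n) (hk : 1 ≤ k)
    (hW : ∀ i, W i ∈ sem (.sharp (bitsTy k)) emptyVal)
    (hWt : ∀ i, StepStar (appS (.term t) (ofVec (ketVec n (Pi.single i 1)))) (W i)) :
    Represents n k (.term t) (linearExtension k W) := fun v w hv hw => by
  obtain ⟨hwv, -, hwamp, -⟩ := (mem_sem_sharp_bitsTy hk).1 hw
  exact ⟨fun h => (lmap_eq_of_stepStar_appS hn hk hW hWt hv hwv h).symm,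
    fun h => stepStar_appS_of_amp_eq hn hk hW hWt hv (h ▸ hwamp)⟩

theorem isIsometricOp_linearExtension (hn : 1 ≤ n) (hk : 1 ≤ k)
    (hW : ∀ i, W i ∈ sem (.sharp (bitsTy k)) emptyVal)
    (hWt : ∀ i, StepStar (appS (.term t) (ofVec (ketVec n (Pi.single i 1)))) (W i))
    (ht : ∀ v ∈ sem (.sharp (bitsTy n)) emptyVal,
      Realizes (appS (.term t) v) (sem (.sharp (bitsTy k)) emptyVal)) :
    IsIsometricOp (linearExtension k W) := .of_cInner_self_eq_one fun α hα => by
  obtain ⟨w, hw, hvw⟩ := ht _ (ofVec_ketVec_mem_sem hn hα)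
  obtain ⟨hwv, -, -, hw1⟩ := (mem_sem_sharp_bitsTy hk).1 hw
  rwa [← lmap_ofVec_ketVec hn α,
    ← lmap_eq_of_stepStar_appS hn hk hW hWt (ofVec_ketVec_mem_sem hn hα) hwv hvw]

end LinearExtension

theorem exists_isIsometricOp_represents {n k : ℕ} (hn : 1 ≤ n) (hk : 1 ≤ k) {t : Sup}
    (ht : t ∈ sem (.lolli (.sharp (bitsTy n)) (.sharp (bitsTy k))) emptyVal) :
    ∃ F : (Fin (2 ^ n) → ℂ) →ₗ[ℂ] (Fin (2 ^ k) → ℂ), IsIsometricOp F ∧ Represents n k t F := by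
  obtain ⟨⟨x, b, rfl⟩, hreal⟩ := ht
  choose W hW hWt using fun i => hreal _ (ofVec_ketVec_mem_sem hn (cInner_single_one i))
  exact ⟨linearExtension k W, isIsometricOp_linearExtension hn hk hW hWt hreal,
    represents_linearExtension hn hk hW hWt⟩

end

/-- **Soundness / unitarity** (Theorem 5.7): any closed superposition
`λx.t⃗ ∈ ⟦♯(𝔹ⁿ) ⊸ ♯(𝔹ᵏ)⟧_∅` with `k ≥ n` represents an isometry
`ℂ^{2ⁿ} → ℂ^{2ᵏ}`; with `k = n` it represents a unitary operator; and for
`k < n` the type is uninhabited. -/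
theorem unitarity_soundness (n k : ℕ) (hn : 1 ≤ n) (hk : 1 ≤ k) :
    (∀ (x : ℕ) (b : Sup),
      Sup.term (.lam x b) ∈ sem (.lolli (.sharp (bitsTy n)) (.sharp (bitsTy k))) emptyVal →
      (n ≤ k → ∃ F : (Fin (2 ^ n) → ℂ) →ₗ[ℂ] (Fin (2 ^ k) → ℂ),
        IsIsometricOp F ∧ Represents n k (Sup.term (.lam x b)) F) ∧
      (k = n → ∃ F : (Fin (2 ^ n) → ℂ) →ₗ[ℂ] (Fin (2 ^ k) → ℂ),
        IsIsometricOp F ∧ Function.Bijective F ∧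
        Represents n k (Sup.term (.lam x b)) F)) ∧
    (k < n → sem (.lolli (.sharp (bitsTy n)) (.sharp (bitsTy k))) emptyVal = ∅) := by
  refine ⟨fun x b hL => ?_, fun hkn => Set.eq_empty_of_forall_notMem fun t ht => ?_⟩
  · obtain ⟨F, hF, hrep⟩ := exists_isIsometricOp_represents hn hk hL
    refine ⟨fun _ => ⟨F, hF, hrep⟩, fun hkn => ?_⟩
    subst hkn
    exact ⟨F, hF, ⟨hF.injective, LinearMap.surjective_of_injective hF.injective⟩, hrep⟩
  · obtain ⟨F, hF, -⟩ := exists_isIsometricOp_represents hn hk ht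
    have := (Nat.pow_le_pow_iff_right (by norm_num)).1 hF.le
    omega

end PUNQFormal
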